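/- arXiv:math/0612064 — 3 statements merged into one kernel-verified Lean document; each statement's English description precedes it below -/
import Mathlib

section
/- Let r ≥ 1 and let S be any commutative unital ring with parameters ρ, q, δ_j (j ≥ 0) and u_1, …, u_r. In the cyclotomic BMW algebra W_{2,S,r}(u_1,…,u_r), the left ideal W_{2,S,r}(u_1,…,u_r) · e_1 is equal to the S-span of the set {e_1, y_1 e_1, y_1^2 e_1, …, y_1^{r−1} e_1}. -/
open scoped BigOperators

namespace CycBMW

/-- Generators of the affine BMW algebra on `n` strands: `y`, its formal inverse,
and `g i`, `g i`⁻¹ (formal), `e i` for `i : Fin (n-1)`, where the index `i`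
represents the paper's index `i+1 ∈ {1, …, n-1}`. -/
inductive Gen (n : ℕ) : Type
  | y : Gen n
  | yi : Gen n
  | g : Fin (n - 1) → Gen n
  | gi : Fin (n - 1) → Gen n
  | e : Fin (n - 1) → Gen n

/-- The parameters `ρ, q, δ_j` of the ground ring. -/
structure Par (S : Type*) [CommRing S] where
  rho : Sˣ
  q : Sˣ
  del : ℕ → S

variable {S : Type*} [CommRing S]

/-- The ground-ring relation `ρ⁻¹ − ρ = (q⁻¹ − q)(δ₀ − 1)`. -/
def Par.Ground (P : Par S) : Prop :=
  ((P.rho⁻¹ : Sˣ) : S) - (P.rho : S) = (((P.q⁻¹ : Sˣ) : S) - (P.q : S)) * (P.del 0 - 1)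

section Defs

variable (S)
variable (P : Par S) (n : ℕ)

def Y : FreeAlgebra S (Gen n) := FreeAlgebra.ι S Gen.y
def Yi : FreeAlgebra S (Gen n) := FreeAlgebra.ι S Gen.yi
def G (i : Fin (n - 1)) : FreeAlgebra S (Gen n) := FreeAlgebra.ι S (Gen.g i)
def Gi (i : Fin (n - 1)) : FreeAlgebra S (Gen n) := FreeAlgebra.ι S (Gen.gi i)
def E (i : Fin (n - 1)) : FreeAlgebra S (Gen n) := FreeAlgebra.ι S (Gen.e i)
def c (s : S) : FreeAlgebra S (Gen n) := algebraMap S _ s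

/-- The defining relations of the affine BMW algebra. -/
inductive Rel : FreeAlgebra S (Gen n) → FreeAlgebra S (Gen n) → Prop
  | gInv (i) : Rel (G S n i * Gi S n i) 1
  | gInv' (i) : Rel (Gi S n i * G S n i) 1
  | yInv : Rel (Y S n * Yi S n) 1
  | yInv' : Rel (Yi S n * Y S n) 1
  | eSq (i) : Rel (E S n i * E S n i) (c S n (P.del 0) * E S n i)
  | braid (i j : Fin (n - 1)) (h : (i : ℕ) + 1 = j) :
      Rel (G S n i * G S n j * G S n i) (G S n j * G S n i * G S n j)
  | gg (i j : Fin (n - 1)) (h : (i : ℕ) + 2 ≤ j ∨ (j : ℕ) + 2 ≤ i) :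
      Rel (G S n i * G S n j) (G S n j * G S n i)
  | ygyg (i : Fin (n - 1)) (h : (i : ℕ) = 0) :
      Rel (Y S n * G S n i * Y S n * G S n i) (G S n i * Y S n * G S n i * Y S n)
  | yg (i : Fin (n - 1)) (h : 1 ≤ (i : ℕ)) : Rel (Y S n * G S n i) (G S n i * Y S n)
  | ge (i j : Fin (n - 1)) (h : (i : ℕ) + 2 ≤ j ∨ (j : ℕ) + 2 ≤ i) :
      Rel (G S n i * E S n j) (E S n j * G S n i)
  | ee (i j : Fin (n - 1)) (h : (i : ℕ) + 2 ≤ j ∨ (j : ℕ) + 2 ≤ i) :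
      Rel (E S n i * E S n j) (E S n j * E S n i)
  | ye (i : Fin (n - 1)) (h : 1 ≤ (i : ℕ)) : Rel (Y S n * E S n i) (E S n i * Y S n)
  | eee (i j : Fin (n - 1)) (h : (i : ℕ) + 1 = j ∨ (j : ℕ) + 1 = i) :
      Rel (E S n i * E S n j * E S n i) (E S n i)
  | gge (i j : Fin (n - 1)) (h : (i : ℕ) + 1 = j ∨ (j : ℕ) + 1 = i) :
      Rel (G S n i * G S n j * E S n i) (E S n j * E S n i)
  | egg (i j : Fin (n - 1)) (h : (i : ℕ) + 1 = j ∨ (j : ℕ) + 1 = i) :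
      Rel (E S n i * G S n j * G S n i) (E S n i * E S n j)
  | eye (i : Fin (n - 1)) (hi : (i : ℕ) = 0) (m : ℕ) (hm : 1 ≤ m) :
      Rel (E S n i * (Y S n) ^ m * E S n i) (c S n (P.del m) * E S n i)
  | skein (i) :
      Rel (G S n i - Gi S n i) (c S n (((P.q⁻¹ : Sˣ) : S) - (P.q : S)) * (E S n i - 1))
  | untwist (i) : Rel (G S n i * E S n i) (c S n ((P.rho⁻¹ : Sˣ) : S) * E S n i)
  | untwist' (i) : Rel (E S n i * G S n i) (c S n ((P.rho⁻¹ : Sˣ) : S) * E S n i)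
  | ege (i j : Fin (n - 1)) (h : (i : ℕ) + 1 = j ∨ (j : ℕ) + 1 = i) :
      Rel (E S n i * G S n j * E S n i) (c S n ((P.rho : Sˣ) : S) * E S n i)
  | unwrap (i : Fin (n - 1)) (hi : (i : ℕ) = 0) :
      Rel (E S n i * Y S n * G S n i * Y S n) (c S n ((P.rho : Sˣ) : S) * E S n i)
  | unwrap' (i : Fin (n - 1)) (hi : (i : ℕ) = 0) :
      Rel (Y S n * G S n i * Y S n * E S n i) (c S n ((P.rho : Sˣ) : S) * E S n i)

/-- The affine BMW algebra `W^aff_{n,S}`. -/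
abbrev AffW : Type _ := RingQuot (Rel S P n)

def yA : AffW S P n := RingQuot.mkAlgHom S (Rel S P n) (Y S n)
def yiA : AffW S P n := RingQuot.mkAlgHom S (Rel S P n) (Yi S n)
def gA (i : Fin (n - 1)) : AffW S P n := RingQuot.mkAlgHom S (Rel S P n) (G S n i)
def giA (i : Fin (n - 1)) : AffW S P n := RingQuot.mkAlgHom S (Rel S P n) (Gi S n i)
def eA (i : Fin (n - 1)) : AffW S P n := RingQuot.mkAlgHom S (Rel S P n) (E S n i)

variable (r : ℕ) (u : Fin r → Sˣ)

/-- The cyclotomic polynomial `(y₁ − u₁)(y₁ − u₂)⋯(y₁ − u_r)` in the affine BMW algebra. -/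
def cycPoly : AffW S P n :=
  (List.ofFn fun i : Fin r => yA S P n - algebraMap S (AffW S P n) ((u i : Sˣ) : S)).prod

/-- The cyclotomic relation. -/
def cRel : AffW S P n → AffW S P n → Prop :=
  fun a b => a = cycPoly S P n r u ∧ b = 0

/-- The cyclotomic BMW algebra `W_{n,S,r}(u_1, …, u_r)`. -/
abbrev CycW : Type _ := RingQuot (cRel S P n r u)

def toCyc : AffW S P n →ₐ[S] CycW S P n r u := RingQuot.mkAlgHom S (cRel S P n r u)

def yC : CycW S P n r u := toCyc S P n r u (yA S P n)
def yiC : CycW S P n r u := toCyc S P n r u (yiA S P n)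
def gC (i : Fin (n - 1)) : CycW S P n r u := toCyc S P n r u (gA S P n i)
def giC (i : Fin (n - 1)) : CycW S P n r u := toCyc S P n r u (giA S P n i)
def eC (i : Fin (n - 1)) : CycW S P n r u := toCyc S P n r u (eA S P n i)

/-- `yprime j` is the element `y'_{j+1} = g_j ⋯ g_1 y_1 g_1⁻¹ ⋯ g_j⁻¹` of the cyclotomic
BMW algebra (paper indexing: `y'_k = yprime (k-1)` for `1 ≤ k ≤ n`). -/
def yprime : ℕ → CycW S P n r u
  | 0 => yC S P n r u
  | (j + 1) =>
      if h : j < n - 1 then gC S P n r u ⟨j, h⟩ * yprime j * giC S P n r u ⟨j, h⟩ else 1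

/-- The affine-algebra version of `yprime`. -/
def yprimeA : ℕ → AffW S P n
  | 0 => yA S P n
  | (j + 1) =>
      if h : j < n - 1 then gA S P n ⟨j, h⟩ * yprimeA j * giA S P n ⟨j, h⟩ else 1

/-- The `m`-th elementary symmetric function `ε_m(u_1, …, u_r)`. -/
def esym (m : ℕ) : S := (Multiset.map (fun i => ((u i : Sˣ) : S)) Finset.univ.val).esymm m

end Defs

/-- `DeltaExt P Δ` says that `Δ : ℤ → S` extends the parameters `δ_j` according to the
recursion `δ_{−1} = ρ^{−2} δ_1`,
`δ_{−j} = ρ^{−2} δ_j − (q^{−1} − q) ρ^{−1} Σ_{k=1}^{j−1} (δ_k δ_{k−j} − δ_{2k−j})`. -/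
def DeltaExt (P : Par S) (Δ : ℤ → S) : Prop :=
  (∀ j : ℕ, Δ (j : ℤ) = P.del j) ∧
  ∀ j : ℕ, 1 ≤ j → Δ (-(j : ℤ)) =
    ((P.rho⁻¹ : Sˣ) : S) ^ 2 * P.del j -
      (((P.q⁻¹ : Sˣ) : S) - (P.q : S)) * ((P.rho⁻¹ : Sˣ) : S) *
        ∑ k ∈ Finset.Icc 1 (j - 1),
          (P.del k * Δ ((k : ℤ) - (j : ℤ)) - Δ (2 * (k : ℤ) - (j : ℤ)))

/-- Weak admissibility: `Σ_{k=0}^r (−1)^{r−k} ε_{r−k}(u) δ_{k+a} = 0` for all `a ∈ ℤ`,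
where `δ_m` for `m < 0` is given by the recursion above. -/
def WeakAdm (P : Par S) (r : ℕ) (u : Fin r → Sˣ) : Prop :=
  ∃ Δ : ℤ → S, DeltaExt P Δ ∧
    ∀ a : ℤ, ∑ k ∈ Finset.range (r + 1),
      (-1 : S) ^ (r - k) * esym S r u (r - k) * Δ ((k : ℤ) + a) = 0

/-- Admissibility in the sense of Wilcox and Yu. -/
def Adm (P : Par S) (r : ℕ) (u : Fin r → Sˣ) : Prop :=
  WeakAdm P r u ∧
  ((P.q : S) - ((P.q⁻¹ : Sˣ) : S) ≠ 0) ∧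
  (∀ s : S, s * ((P.q : S) - ((P.q⁻¹ : Sˣ) : S)) = 0 → s = 0) ∧
  LinearIndependent S
    (fun k : Fin r => (yC S P 2 r u) ^ (k : ℕ) * eC S P 2 r u ⟨0, by norm_num⟩)

end CycBMW

namespace CycBMWAux

open CycBMW

noncomputable section

variable {S : Type*} [CommRing S] (P : Par S) (r : ℕ) (u : Fin r → Sˣ)

/-- The canonical map from the free algebra to the cyclotomic BMW algebra. -/
def phi2 : FreeAlgebra S (Gen 2) →ₐ[S] CycW S P 2 r u :=
  (toCyc S P 2 r u).comp (RingQuot.mkAlgHom S (Rel S P 2))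

lemma phi2_rel {a b : FreeAlgebra S (Gen 2)} (h : Rel S P 2 a b) :
    phi2 P r u a = phi2 P r u b := by
  simp only [phi2, AlgHom.comp_apply, RingQuot.mkAlgHom_rel S h]

def ii : Fin (2 - 1) := ⟨0, by norm_num⟩

def yv : CycW S P 2 r u := yC S P 2 r u
def zv : CycW S P 2 r u := yiC S P 2 r u
def gv : CycW S P 2 r u := gC S P 2 r u ii
def hv : CycW S P 2 r u := giC S P 2 r u ii
def ev : CycW S P 2 r u := eC S P 2 r u ii

lemma phi2_Y : phi2 P r u (Y S 2) = yv P r u := rfl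
lemma phi2_Yi : phi2 P r u (Yi S 2) = zv P r u := rfl
lemma phi2_G : phi2 P r u (G S 2 ii) = gv P r u := rfl
lemma phi2_Gi : phi2 P r u (Gi S 2 ii) = hv P r u := rfl
lemma phi2_E : phi2 P r u (E S 2 ii) = ev P r u := rfl
lemma phi2_c (s : S) : phi2 P r u (c S 2 s) = algebraMap S (CycW S P 2 r u) s :=
  (phi2 P r u).commutes s

lemma phi2_surj : Function.Surjective (phi2 P r u) := by
  intro w
  obtain ⟨a, ha⟩ := RingQuot.mkAlgHom_surjective S (cRel S P 2 r u) w
  obtain ⟨x, hx⟩ := RingQuot.mkAlgHom_surjective S (Rel S P 2) a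
  exact ⟨x, by simp [phi2, toCyc, hx, ha]⟩

-- basic relations in the cyclotomic BMW algebra at n = 2
lemma Ryz : yv P r u * zv P r u = 1 := by
  simpa [map_mul, phi2_Y, phi2_Yi] using phi2_rel P r u (Rel.yInv)

lemma Rzy : zv P r u * yv P r u = 1 := by
  simpa [map_mul, phi2_Y, phi2_Yi] using phi2_rel P r u (Rel.yInv')

lemma Rgh : gv P r u * hv P r u = 1 := by
  simpa [map_mul, phi2_G, phi2_Gi] using phi2_rel P r u (Rel.gInv ii)

lemma Rhg : hv P r u * gv P r u = 1 := by
  simpa [map_mul, phi2_G, phi2_Gi] using phi2_rel P r u (Rel.gInv' ii)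

lemma Ree : ev P r u * ev P r u = (P.del 0) • ev P r u := by
  have := phi2_rel P r u (Rel.eSq ii)
  simpa [map_mul, phi2_E, phi2_c, Algebra.smul_def] using this

lemma Reye (m : ℕ) (hm : 1 ≤ m) :
    ev P r u * (yv P r u) ^ m * ev P r u = (P.del m) • ev P r u := by
  have := phi2_rel P r u (Rel.eye ii rfl m hm)
  simpa [map_mul, map_pow, phi2_E, phi2_Y, phi2_c, Algebra.smul_def] using this

lemma Rskein :
    gv P r u - hv P r u
      = (((P.q⁻¹ : Sˣ) : S) - (P.q : S)) • (ev P r u - 1) := by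
  have := phi2_rel P r u (Rel.skein ii)
  simpa [map_mul, map_sub, map_one, phi2_G, phi2_Gi, phi2_E, phi2_c,
    Algebra.smul_def] using this

lemma Rge : gv P r u * ev P r u = ((P.rho⁻¹ : Sˣ) : S) • ev P r u := by
  have := phi2_rel P r u (Rel.untwist ii)
  simpa [map_mul, phi2_G, phi2_E, phi2_c, Algebra.smul_def] using this

lemma Reg : ev P r u * gv P r u = ((P.rho⁻¹ : Sˣ) : S) • ev P r u := by
  have := phi2_rel P r u (Rel.untwist' ii)
  simpa [map_mul, phi2_G, phi2_E, phi2_c, Algebra.smul_def] using this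

lemma Runwrap :
    yv P r u * gv P r u * yv P r u * ev P r u = ((P.rho : Sˣ) : S) • ev P r u := by
  have := phi2_rel P r u (Rel.unwrap' ii rfl)
  simpa [map_mul, phi2_G, phi2_E, phi2_Y, phi2_c, Algebra.smul_def] using this

lemma Rygyg :
    yv P r u * gv P r u * yv P r u * gv P r u
      = gv P r u * yv P r u * gv P r u * yv P r u := by
  have := phi2_rel P r u (Rel.ygyg ii rfl)
  simpa [map_mul, phi2_G, phi2_Y] using this

lemma Rcyc :
    (List.ofFn fun i : Fin r =>
      yv P r u - algebraMap S (CycW S P 2 r u) ((u i : Sˣ) : S)).prod = 0 := by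
  have h0 : toCyc S P 2 r u (cycPoly S P 2 r u) = 0 := by
    have h := RingQuot.mkAlgHom_rel S
      (show cRel S P 2 r u (cycPoly S P 2 r u) 0 from ⟨rfl, rfl⟩)
    simpa [toCyc] using h
  rw [cycPoly, map_list_prod] at h0
  simpa [List.map_ofFn, Function.comp_def, map_sub, yv, yC, yA, toCyc,
    AlgHom.commutes] using h0


/-- `y'₂ = g₁ y₁ g₁`. -/
def wv : CycW S P 2 r u := gv P r u * yv P r u * gv P r u

lemma D_gye :
    gv P r u * (yv P r u * ev P r u)
      = ((P.rho : Sˣ) : S) • (zv P r u * ev P r u) := by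
  calc gv P r u * (yv P r u * ev P r u)
      = (zv P r u * yv P r u) * (gv P r u * (yv P r u * ev P r u)) := by
        rw [Rzy, one_mul]
    _ = zv P r u * (yv P r u * gv P r u * yv P r u * ev P r u) := by
        simp only [mul_assoc]
    _ = zv P r u * (((P.rho : Sˣ) : S) • ev P r u) := by rw [Runwrap]
    _ = ((P.rho : Sˣ) : S) • (zv P r u * ev P r u) := mul_smul_comm _ _ _

lemma D_we : wv P r u * ev P r u = zv P r u * ev P r u := by
  calc wv P r u * ev P r u
      = (gv P r u * yv P r u) * (gv P r u * ev P r u) := by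
        simp only [wv, mul_assoc]
    _ = (gv P r u * yv P r u) * (((P.rho⁻¹ : Sˣ) : S) • ev P r u) := by rw [Rge]
    _ = ((P.rho⁻¹ : Sˣ) : S) • (gv P r u * (yv P r u * ev P r u)) := by
        rw [mul_smul_comm, mul_assoc]
    _ = ((P.rho⁻¹ : Sˣ) : S) • (((P.rho : Sˣ) : S) • (zv P r u * ev P r u)) := by
        rw [D_gye]
    _ = zv P r u * ev P r u := by
        rw [smul_smul, Units.inv_mul, one_smul]

lemma D_yw : yv P r u * wv P r u = wv P r u * yv P r u := by
  have h := Rygyg P r u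
  simp only [wv, mul_assoc] at h ⊢
  exact h

lemma D_gy : gv P r u * yv P r u = wv P r u * hv P r u := by
  have h : wv P r u * hv P r u = gv P r u * yv P r u := by
    calc wv P r u * hv P r u
        = (gv P r u * yv P r u) * (gv P r u * hv P r u) := by
          simp only [wv, mul_assoc]
      _ = gv P r u * yv P r u := by rw [Rgh, mul_one]
  exact h.symm

lemma D_h :
    hv P r u = gv P r u - (((P.q⁻¹ : Sˣ) : S) - (P.q : S)) • (ev P r u - 1) := by
  rw [← Rskein]
  exact (sub_sub_cancel (gv P r u) (hv P r u)).symm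

lemma csub (x y : CycW S P 2 r u) : x - y = x + (-1 : S) • y := by
  have h1 : x - y = x + -y := sub_eq_add_neg x y
  have h2 : (-1 : S) • y = -y := neg_one_smul S y
  rw [h1, h2]

/-- The span of all `y^k e`, `k : ℕ`. -/
def NN : Submodule S (CycW S P 2 r u) :=
  Submodule.span S (Set.range fun k : ℕ => yv P r u ^ k * ev P r u)

lemma mul_span_mem {A : Type*} [Ring A] [Algebra S A] (a : A)
    (T : Set A) (Q : Submodule S A) (hT : ∀ x ∈ T, a * x ∈ Q) :
    ∀ v ∈ Submodule.span S T, a * v ∈ Q := by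
  intro v hv
  have hle : Submodule.span S T ≤ Q.comap (LinearMap.mulLeft S a) :=
    Submodule.span_le.mpr hT
  exact hle hv

lemma Ngen (k : ℕ) : yv P r u ^ k * ev P r u ∈ NN P r u :=
  Submodule.subset_span ⟨k, rfl⟩

lemma Nee : ev P r u ∈ NN P r u := by
  simpa using Ngen P r u 0

lemma yN : ∀ v ∈ NN P r u, yv P r u * v ∈ NN P r u := by
  intro v hv
  refine mul_span_mem (yv P r u)
    (Set.range fun k : ℕ => yv P r u ^ k * ev P r u) (NN P r u) ?_ v hv
  rintro x ⟨k, rfl⟩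
  rw [← mul_assoc, ← pow_succ']
  exact Ngen P r u (k + 1)

lemma ypowN (m : ℕ) : ∀ v ∈ NN P r u, yv P r u ^ m * v ∈ NN P r u := by
  induction m with
  | zero => intro v hv; simpa using hv
  | succ m ih =>
    intro v hv
    rw [pow_succ', mul_assoc]
    exact yN P r u _ (ih v hv)

lemma cycKey :
    ∀ L : List Sˣ, ∃ v ∈ NN P r u,
      ((L.map fun cu : Sˣ =>
          yv P r u - algebraMap S (CycW S P 2 r u) (cu : S)).prod) * ev P r u
        = yv P r u * v
          + ((-1 : S) ^ L.length * (L.map fun cu : Sˣ => (cu : S)).prod) • ev P r u := by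
  intro L
  induction L with
  | nil => exact ⟨0, zero_mem _, by simp⟩
  | cons cu L ih =>
    obtain ⟨v, hvN, hv⟩ := ih
    refine ⟨yv P r u * v
        + ((-1 : S) ^ L.length * (L.map fun cu : Sˣ => (cu : S)).prod) • ev P r u
        + (-(cu : S)) • v, ?_, ?_⟩
    · exact Submodule.add_mem _ (Submodule.add_mem _ (yN P r u v hvN)
        (Submodule.smul_mem _ _ (Nee P r u))) (Submodule.smul_mem _ _ hvN)
    have expand :
        ((yv P r u - algebraMap S (CycW S P 2 r u) (cu : S)) *
            (L.map fun cu : Sˣ =>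
              yv P r u - algebraMap S (CycW S P 2 r u) (cu : S)).prod) * ev P r u
          = (yv P r u - algebraMap S (CycW S P 2 r u) (cu : S)) *
              ((L.map fun cu : Sˣ =>
                yv P r u - algebraMap S (CycW S P 2 r u) (cu : S)).prod * ev P r u) :=
      mul_assoc _ _ _
    rw [List.map_cons, List.prod_cons, expand, hv]
    simp only [List.length_cons, List.map_cons, List.prod_cons, pow_succ, csub]
    simp only [add_mul, mul_add, smul_add, smul_mul_assoc, mul_smul_comm, smul_smul,
      mul_assoc, ← Algebra.smul_def]
    module


lemma ofFn_map_eq :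
    ((List.ofFn u).map fun cu : Sˣ =>
        yv P r u - algebraMap S (CycW S P 2 r u) (cu : S))
      = List.ofFn fun i : Fin r =>
          yv P r u - algebraMap S (CycW S P 2 r u) ((u i : Sˣ) : S) := by
  rw [List.map_ofFn]; rfl

lemma unitD : IsUnit ((-1 : S) ^ (List.ofFn u).length
    * ((List.ofFn u).map fun cu : Sˣ => (cu : S)).prod) := by
  apply IsUnit.mul
  · exact (isUnit_one.neg).pow _
  · generalize List.ofFn u = L
    induction L with
    | nil => simpa using isUnit_one
    | cons a L ih =>
      rw [List.map_cons, List.prod_cons]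
      exact (Units.isUnit a).mul ih

lemma zeN : zv P r u * ev P r u ∈ NN P r u := by
  obtain ⟨v, hvN, hv⟩ := cycKey P r u (List.ofFn u)
  rw [ofFn_map_eq, Rcyc, zero_mul] at hv
  obtain ⟨Du, hDu⟩ := unitD (S := S) r u
  rw [← hDu] at hv
  have hone : ((Du⁻¹ : Sˣ) : S) * (Du : S) = 1 := Units.inv_mul _
  have h0 := congrArg (fun t => ((Du⁻¹ : Sˣ) : S) • t) hv
  simp only [smul_zero, smul_add, smul_smul, hone, one_smul] at h0
  -- h0 : 0 = (Du⁻¹) • (yv * v) + ev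
  have he : ev P r u = (-((Du⁻¹ : Sˣ) : S)) • (yv P r u * v) := by
    calc ev P r u
        = (((Du⁻¹ : Sˣ) : S) • (yv P r u * v) + ev P r u)
            + (-((Du⁻¹ : Sˣ) : S)) • (yv P r u * v) := by module
      _ = 0 + (-((Du⁻¹ : Sˣ) : S)) • (yv P r u * v) := by rw [← h0]
      _ = (-((Du⁻¹ : Sˣ) : S)) • (yv P r u * v) := zero_add _
  have hz : zv P r u * ev P r u = (-((Du⁻¹ : Sˣ) : S)) • v := by
    calc zv P r u * ev P r u
        = (-((Du⁻¹ : Sˣ) : S)) • (zv P r u * (yv P r u * v)) := by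
          rw [he, mul_smul_comm]
      _ = (-((Du⁻¹ : Sˣ) : S)) • v := by rw [← mul_assoc, Rzy, one_mul]
  rw [hz]
  exact Submodule.smul_mem _ _ hvN

lemma zN : ∀ v ∈ NN P r u, zv P r u * v ∈ NN P r u := by
  refine mul_span_mem (zv P r u)
    (Set.range fun k : ℕ => yv P r u ^ k * ev P r u) (NN P r u) ?_
  rintro x ⟨k, rfl⟩
  cases k with
  | zero => simpa using zeN P r u
  | succ k =>
    show zv P r u * (yv P r u ^ (k + 1) * ev P r u) ∈ NN P r u
    rw [pow_succ', mul_assoc, ← mul_assoc (zv P r u), Rzy, one_mul]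
    exact Ngen P r u k

lemma eN : ∀ v ∈ NN P r u, ev P r u * v ∈ NN P r u := by
  refine mul_span_mem (ev P r u)
    (Set.range fun k : ℕ => yv P r u ^ k * ev P r u) (NN P r u) ?_
  rintro x ⟨k, rfl⟩
  cases k with
  | zero =>
    show ev P r u * (yv P r u ^ 0 * ev P r u) ∈ NN P r u
    rw [pow_zero, one_mul, Ree]
    exact Submodule.smul_mem _ _ (Nee P r u)
  | succ k =>
    show ev P r u * (yv P r u ^ (k + 1) * ev P r u) ∈ NN P r u
    rw [← mul_assoc, Reye P r u (k + 1) (Nat.succ_le_succ (Nat.zero_le _))]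
    exact Submodule.smul_mem _ _ (Nee P r u)

lemma wN : ∀ v ∈ NN P r u, wv P r u * v ∈ NN P r u := by
  refine mul_span_mem (wv P r u)
    (Set.range fun k : ℕ => yv P r u ^ k * ev P r u) (NN P r u) ?_
  rintro x ⟨k, rfl⟩
  show wv P r u * (yv P r u ^ k * ev P r u) ∈ NN P r u
  have c1 : Commute (wv P r u) (yv P r u) := (D_yw P r u).symm
  have c2 : wv P r u * yv P r u ^ k = yv P r u ^ k * wv P r u := (c1.pow_right k).eq
  rw [← mul_assoc, c2, mul_assoc, D_we]
  exact ypowN P r u k _ (zeN P r u)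

lemma hsplitL (x : CycW S P 2 r u) :
    hv P r u * x = gv P r u * x
      + (-(((P.q⁻¹ : Sˣ) : S) - (P.q : S))) • (ev P r u * x)
      + (((P.q⁻¹ : Sˣ) : S) - (P.q : S)) • x := by
  rw [D_h]
  simp only [csub, add_mul, smul_mul_assoc, one_mul]
  module

lemma GB (m : ℕ) :
    gv P r u * (yv P r u ^ m * ev P r u) ∈ NN P r u ∧
      hv P r u * (yv P r u ^ m * ev P r u) ∈ NN P r u := by
  induction m with
  | zero =>
    constructor
    · rw [pow_zero, one_mul, Rge]
      exact Submodule.smul_mem _ _ (Nee P r u)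
    · rw [hsplitL]
      apply Submodule.add_mem
      apply Submodule.add_mem
      · rw [pow_zero, one_mul, Rge]
        exact Submodule.smul_mem _ _ (Nee P r u)
      · apply Submodule.smul_mem
        rw [pow_zero, one_mul, Ree]
        exact Submodule.smul_mem _ _ (Nee P r u)
      · exact Submodule.smul_mem _ _ (Ngen P r u 0)
  | succ m ih =>
    have hA : gv P r u * (yv P r u ^ (m + 1) * ev P r u) ∈ NN P r u := by
      rw [pow_succ', mul_assoc, ← mul_assoc (gv P r u), D_gy, mul_assoc]
      exact wN P r u _ ih.2
    refine ⟨hA, ?_⟩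
    rw [hsplitL]
    apply Submodule.add_mem
    apply Submodule.add_mem
    · exact hA
    · exact Submodule.smul_mem _ _ (eN P r u _ (Ngen P r u (m + 1)))
    · exact Submodule.smul_mem _ _ (Ngen P r u (m + 1))

lemma gN : ∀ v ∈ NN P r u, gv P r u * v ∈ NN P r u := by
  refine mul_span_mem (gv P r u)
    (Set.range fun k : ℕ => yv P r u ^ k * ev P r u) (NN P r u) ?_
  rintro x ⟨k, rfl⟩
  exact (GB P r u k).1

lemma hN : ∀ v ∈ NN P r u, hv P r u * v ∈ NN P r u := by
  refine mul_span_mem (hv P r u)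
    (Set.range fun k : ℕ => yv P r u ^ k * ev P r u) (NN P r u) ?_
  rintro x ⟨k, rfl⟩
  exact (GB P r u k).2

lemma main_all (w : CycW S P 2 r u) : ∀ v ∈ NN P r u, w * v ∈ NN P r u := by
  obtain ⟨x, rfl⟩ := phi2_surj P r u w
  induction x using FreeAlgebra.induction with
  | grade0 s =>
    intro v hv
    rw [AlgHom.commutes, ← Algebra.smul_def]
    exact Submodule.smul_mem _ _ hv
  | grade1 gen =>
    cases gen with
    | y => exact yN P r u
    | yi => exact zN P r u
    | g i =>
      have hi : i = ii := by
        apply Fin.ext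
        have := i.isLt
        omega
      rw [hi]
      exact gN P r u
    | gi i =>
      have hi : i = ii := by
        apply Fin.ext
        have := i.isLt
        omega
      rw [hi]
      exact hN P r u
    | e i =>
      have hi : i = ii := by
        apply Fin.ext
        have := i.isLt
        omega
      rw [hi]
      exact eN P r u
  | mul a b iha ihb =>
    intro v hv
    rw [map_mul, mul_assoc]
    exact iha _ (ihb v hv)
  | add a b iha ihb =>
    intro v hv
    rw [map_add, add_mul]
    exact Submodule.add_mem _ (iha v hv) (ihb v hv)

lemma cycKey2 :
    ∀ L : List Sˣ, ∃ p ∈ Submodule.span S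
        ((fun j : ℕ => yv P r u ^ j * ev P r u) '' Set.Iio L.length),
      (L.map fun cu : Sˣ =>
          yv P r u - algebraMap S (CycW S P 2 r u) (cu : S)).prod * ev P r u
        = yv P r u ^ L.length * ev P r u + p := by
  intro L
  induction L with
  | nil => exact ⟨0, zero_mem _, by simp⟩
  | cons cu L ih =>
    obtain ⟨p, hp, hEq⟩ := ih
    refine ⟨yv P r u * p + (-(cu : S)) • (yv P r u ^ L.length * ev P r u)
        + (-(cu : S)) • p, ?_, ?_⟩
    · simp only [List.length_cons]
      have hmono : Submodule.span S
            ((fun j : ℕ => yv P r u ^ j * ev P r u) '' Set.Iio L.length)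
          ≤ Submodule.span S
            ((fun j : ℕ => yv P r u ^ j * ev P r u) '' Set.Iio (L.length + 1)) :=
        Submodule.span_mono (Set.image_mono (Set.Iio_subset_Iio (Nat.le_succ _)))
      apply Submodule.add_mem
      apply Submodule.add_mem
      · refine mul_span_mem (yv P r u) _ _ ?_ p hp
        rintro x ⟨j, hj, rfl⟩
        show yv P r u * (yv P r u ^ j * ev P r u) ∈ _
        rw [← mul_assoc, ← pow_succ']
        exact Submodule.subset_span ⟨j + 1, by simpa using Nat.succ_lt_succ hj, rfl⟩
      · exact Submodule.smul_mem _ _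
          (Submodule.subset_span ⟨L.length, by simp, rfl⟩)
      · exact Submodule.smul_mem _ _ (hmono hp)
    · rw [List.map_cons, List.prod_cons, mul_assoc, hEq]
      simp only [List.length_cons, csub, pow_succ']
      simp only [add_mul, mul_add, smul_add, smul_mul_assoc, mul_smul_comm,
        smul_smul, mul_assoc, ← Algebra.smul_def]
      module

/-- The span of `y^k e` for `k < r`. -/
def MM : Submodule S (CycW S P 2 r u) :=
  Submodule.span S (Set.range fun k : Fin r => yv P r u ^ (k : ℕ) * ev P r u)

lemma yrN : yv P r u ^ r * ev P r u ∈ Submodule.span S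
    ((fun j : ℕ => yv P r u ^ j * ev P r u) '' Set.Iio r) := by
  obtain ⟨p, hp, hEq⟩ := cycKey2 P r u (List.ofFn u)
  rw [ofFn_map_eq, Rcyc, zero_mul] at hEq
  simp only [List.length_ofFn] at hp hEq
  have hyr : yv P r u ^ r * ev P r u = (-1 : S) • p := by
    calc yv P r u ^ r * ev P r u
        = (yv P r u ^ r * ev P r u + p) + (-1 : S) • p := by module
      _ = 0 + (-1 : S) • p := by rw [← hEq]
      _ = (-1 : S) • p := zero_add _
  rw [hyr]
  exact Submodule.smul_mem _ _ hp

lemma Hstrong (k : ℕ) : yv P r u ^ k * ev P r u ∈ MM P r u := by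
  induction k using Nat.strong_induction_on with
  | _ k IH =>
    by_cases hk : k < r
    · exact Submodule.subset_span ⟨⟨k, hk⟩, rfl⟩
    · push_neg at hk
      have hsplit : yv P r u ^ k * ev P r u
          = yv P r u ^ (k - r) * (yv P r u ^ r * ev P r u) := by
        rw [← mul_assoc, ← pow_add, Nat.sub_add_cancel hk]
      rw [hsplit]
      refine mul_span_mem (yv P r u ^ (k - r)) _ _ ?_ _ (yrN P r u)
      rintro x ⟨j, hj, rfl⟩
      show yv P r u ^ (k - r) * (yv P r u ^ j * ev P r u) ∈ _
      rw [← mul_assoc, ← pow_add]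
      have hj' : j < r := hj
      exact IH (k - r + j) (by omega)

lemma NleM : NN P r u ≤ MM P r u := by
  rw [NN, Submodule.span_le]
  rintro x ⟨k, rfl⟩
  exact Hstrong P r u k

end

end CycBMWAux
open CycBMW in
/-- In the cyclotomic BMW algebra `W_{2,S,r}(u_1,…,u_r)`, the left ideal `W₂ e₁` equals
the `S`-span of `{e₁, y₁ e₁, …, y₁^{r−1} e₁}`. -/
theorem cyclotomicBMW_leftIdeal_e
    (S : Type*) [CommRing S] (r : ℕ) (hr : 1 ≤ r)
    (P : Par S) (hδ0 : IsUnit (P.del 0)) (hground : P.Ground)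
    (u : Fin r → Sˣ) :
    {x : CycW S P 2 r u | ∃ w : CycW S P 2 r u, x = w * eC S P 2 r u ⟨0, by norm_num⟩} =
      ↑(Submodule.span S (Set.range fun k : Fin r =>
          yC S P 2 r u ^ (k : ℕ) * eC S P 2 r u ⟨0, by norm_num⟩)) := by
  ext x
  simp only [Set.mem_setOf_eq, SetLike.mem_coe]
  constructor
  · rintro ⟨w, rfl⟩
    exact CycBMWAux.NleM P r u
      (CycBMWAux.main_all P r u w _ (CycBMWAux.Nee P r u))
  · intro hx
    rw [Submodule.mem_span_range_iff_exists_fun] at hx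
    obtain ⟨cc, hcc⟩ := hx
    refine ⟨∑ i : Fin r, cc i • yC S P 2 r u ^ (i : ℕ), ?_⟩
    rw [← hcc, Finset.sum_mul]
    exact Finset.sum_congr rfl fun i _ => (smul_mul_assoc _ _ _).symm
end

section
/- Let r ≥ 1 and let S be any commutative unital ring with parameters ρ, q, δ_j (j ≥ 0) and u_1, …, u_r. Then in the cyclotomic BMW algebra W_{2,S,r}(u_1,…,u_r), for every integer a ≥ 0 one has ( Σ_{k=0}^{r} (−1)^{r−k} ε_{r−k}(u_1,…,u_r) δ_{k+a} ) · e_1 = 0, where ε_m denotes the m-th elementary symmetric polynomial. -/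
open scoped BigOperators

namespace CycBMW0
open CycBMW Polynomial

variable {S : Type*} [CommRing S] (P : Par S) (r : ℕ) (u : Fin r → Sˣ)

lemma eye_aff (m : ℕ) :
    eA S P 2 ⟨0, by norm_num⟩ * (yA S P 2) ^ m * eA S P 2 ⟨0, by norm_num⟩
      = algebraMap S _ (P.del m) * eA S P 2 ⟨0, by norm_num⟩ := by
  rcases Nat.eq_zero_or_pos m with hm | hm
  · subst hm
    have h := RingQuot.mkAlgHom_rel S (Rel.eSq (S := S) (P := P) (n := 2) (⟨0, by norm_num⟩ : Fin (2 - 1)))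
    simpa [eA, c, map_mul, pow_zero, mul_one] using h
  · have h := RingQuot.mkAlgHom_rel S
      (Rel.eye (S := S) (P := P) (n := 2) (⟨0, by norm_num⟩ : Fin (2 - 1)) rfl m hm)
    simpa [eA, yA, c, map_mul, map_pow] using h

lemma eye_cyc (m : ℕ) :
    eC S P 2 r u ⟨0, by norm_num⟩ * (yC S P 2 r u) ^ m * eC S P 2 r u ⟨0, by norm_num⟩
      = algebraMap S _ (P.del m) * eC S P 2 r u ⟨0, by norm_num⟩ := by
  have := congrArg (toCyc S P 2 r u) (eye_aff P m)
  simpa [eC, yC, map_mul, map_pow, AlgHom.commutes] using this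

lemma cycPoly_eq_zero : toCyc S P 2 r u (cycPoly S P 2 r u) = 0 := by
  have h := RingQuot.mkAlgHom_rel S
    (show cRel S P 2 r u (cycPoly S P 2 r u) 0 from ⟨rfl, rfl⟩)
  simpa [toCyc] using h

lemma expand :
    (0 : CycW S P 2 r u) = ∑ k ∈ Finset.range (r + 1),
      ((-1 : S) ^ (r - k) * esym S r u (r - k)) • (yC S P 2 r u) ^ k := by
  set p : S[X] := ((Finset.univ.val : Multiset (Fin r)).map
      (fun i => X - C ((u i : Sˣ) : S))).prod with hp
  have hcard : Multiset.card ((Finset.univ.val : Multiset (Fin r)).map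
      (fun i => ((u i : Sˣ) : S))) = r := by simp
  have hdeg : p.natDegree < r + 1 := by
    have h1 : p.natDegree ≤ ((((Finset.univ.val : Multiset (Fin r)).map
        (fun i => X - C ((u i : Sˣ) : S))).map natDegree)).sum :=
      Polynomial.natDegree_multiset_prod_le _
    refine Nat.lt_succ_of_le (h1.trans ?_)
    calc _ ≤ Multiset.card (((Finset.univ.val : Multiset (Fin r)).map
          (fun i => X - C ((u i : Sˣ) : S))).map natDegree) • 1 := by
          refine Multiset.sum_le_card_nsmul _ 1 ?_
          intro x hx
          simp only [Multiset.mem_map] at hx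
          obtain ⟨q, ⟨i, _, rfl⟩, rfl⟩ := hx
          exact natDegree_X_sub_C_le _
      _ = r := by simp
  have hcoeff : ∀ k ∈ Finset.range (r + 1),
      p.coeff k = (-1 : S) ^ (r - k) * esym S r u (r - k) := by
    intro k hk
    have hk' : k ≤ r := Nat.lt_succ_iff.mp (Finset.mem_range.mp hk)
    have := Multiset.prod_X_sub_C_coeff
      ((Finset.univ.val : Multiset (Fin r)).map (fun i => ((u i : Sˣ) : S)))
      (k := k) (by rw [hcard]; exact hk')
    rw [Multiset.map_map] at this
    simpa [hp, esym, hcard, Function.comp] using this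
  have haeval : aeval (yC S P 2 r u) p = 0 := by
    have hply : p = (List.ofFn fun i : Fin r => (X : S[X]) - C ((u i : Sˣ) : S)).prod := by
      rw [hp, Fin.univ_val_map, Multiset.prod_coe]
    have h2 : aeval (yC S P 2 r u) p = toCyc S P 2 r u (cycPoly S P 2 r u) := by
      rw [hply, cycPoly, map_list_prod, map_list_prod]
      congr 1
      simp only [List.map_ofFn]
      congr 1
      funext i
      simp [yC, map_sub, aeval_X, aeval_C, AlgHom.commutes]
    rw [h2, cycPoly_eq_zero]
  rw [← haeval, aeval_eq_sum_range' hdeg]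
  exact Finset.sum_congr rfl fun k hk => by rw [hcoeff k hk]

end CycBMW0

open CycBMW in
/-- In `W_{2,S,r}(u_1,…,u_r)`, for every `a ≥ 0`,
`(Σ_{k=0}^r (−1)^{r−k} ε_{r−k}(u_1,…,u_r) δ_{k+a}) e₁ = 0`. -/
theorem cyclotomicBMW_torsion_relation_on_e
    (S : Type*) [CommRing S] (r : ℕ) (hr : 1 ≤ r)
    (P : Par S) (hδ0 : IsUnit (P.del 0)) (hground : P.Ground)
    (u : Fin r → Sˣ) (a : ℕ) :
    algebraMap S (CycW S P 2 r u)
        (∑ k ∈ Finset.range (r + 1),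
          (-1 : S) ^ (r - k) * esym S r u (r - k) * P.del (k + a)) *
      eC S P 2 r u ⟨0, by norm_num⟩ = 0 := by
  set e := eC S P 2 r u ⟨0, by norm_num⟩ with he
  set y := yC S P 2 r u with hy
  have h1 : e * (y ^ a *
      ∑ k ∈ Finset.range (r + 1),
        ((-1 : S) ^ (r - k) * esym S r u (r - k)) • y ^ k) * e = 0 := by
    rw [← CycBMW0.expand P r u]
    simp
  calc algebraMap S (CycW S P 2 r u)
        (∑ k ∈ Finset.range (r + 1),
          (-1 : S) ^ (r - k) * esym S r u (r - k) * P.del (k + a)) * e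
      = ∑ k ∈ Finset.range (r + 1),
          ((-1 : S) ^ (r - k) * esym S r u (r - k) * P.del (k + a)) • e := by
        rw [map_sum, Finset.sum_mul]
        exact Finset.sum_congr rfl fun k _ => (Algebra.smul_def _ _).symm
    _ = e * (y ^ a *
          ∑ k ∈ Finset.range (r + 1),
            ((-1 : S) ^ (r - k) * esym S r u (r - k)) • y ^ k) * e := by
        rw [Finset.mul_sum, Finset.mul_sum, Finset.sum_mul]
        refine Finset.sum_congr rfl fun k _ => ?_
        rw [mul_smul_comm, mul_smul_comm, smul_mul_assoc, ← pow_add]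
        rw [he, hy, CycBMW0.eye_cyc P r u (a + k), ← Algebra.smul_def, smul_smul,
          Nat.add_comm a k]
    _ = 0 := h1
end

section
/- In the braid group B_{n+1}, let B_n denote the subgroup generated by σ_1, …, σ_{n−1}, let V_0 denote the subgroup generated by A_{0,1}, …, A_{0,n}, and let B̂_n = {b ∈ B_{n+1} : π(b)(0) = 0}. Then V_0 is a normal subgroup of B̂_n, every element of B̂_n is a product of an element of B_n and an element of V_0 (i.e., B̂_n = B_n V_0), and B_n ∩ V_0 = {1}; thus B̂_n is the internal semidirect product B_n ⋉ V_0. -/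
namespace BraidB

/-- The braid relations on `n` generators `σ_0, …, σ_{n−1}` (the braid group on `n+1`
strands). -/
def braidRels (n : ℕ) : Set (FreeGroup (Fin n)) :=
  {w | (∃ i j : Fin n, (i : ℕ) + 1 = (j : ℕ) ∧
          w = FreeGroup.of i * FreeGroup.of j * FreeGroup.of i *
              (FreeGroup.of j * FreeGroup.of i * FreeGroup.of j)⁻¹) ∨
       (∃ i j : Fin n, (i : ℕ) + 2 ≤ (j : ℕ) ∧
          w = FreeGroup.of i * FreeGroup.of j * (FreeGroup.of j * FreeGroup.of i)⁻¹)}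

/-- The braid group on `n+1` strands, with generators `σ_0, …, σ_{n−1}`. -/
abbrev BraidGroup (n : ℕ) := PresentedGroup (braidRels n)

/-- The generator `σ_k` (equal to `1` for out-of-range `k`). -/
def σ (n : ℕ) (k : ℕ) : BraidGroup n :=
  if h : k < n then PresentedGroup.of ⟨k, h⟩ else 1

/-- `A n i j = σ_{j−1} ⋯ σ_{i+1} σ_i² σ_{i+1}⁻¹ ⋯ σ_{j−1}⁻¹`, for `0 ≤ i < j ≤ n`. -/
def A (n : ℕ) (i j : ℕ) : BraidGroup n :=
  ((List.range (j - 1 - i)).map (fun k => σ n (j - 1 - k))).prod * (σ n i) ^ 2 *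
    ((List.range (j - 1 - i)).map (fun k => (σ n (i + 1 + k))⁻¹)).prod

end BraidB

namespace BraidB

/-- relators die in the presented group -/
lemma rel_one {n : ℕ} {r : FreeGroup (Fin n)} (h : r ∈ braidRels n) :
    PresentedGroup.mk (braidRels n) r = 1 := by
  have : r ∈ Subgroup.normalClosure (braidRels n) := Subgroup.subset_normalClosure h
  exact (QuotientGroup.eq_one_iff r).mpr this

lemma σ_braid {n a : ℕ} (h : a + 1 < n) :
    σ n a * σ n (a+1) * σ n a = σ n (a+1) * σ n a * σ n (a+1) := by
  have ha : a < n := by omega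
  have hr : (FreeGroup.of (⟨a, ha⟩ : Fin n) * FreeGroup.of (⟨a+1, h⟩ : Fin n) *
      FreeGroup.of (⟨a, ha⟩ : Fin n) *
      (FreeGroup.of (⟨a+1, h⟩ : Fin n) * FreeGroup.of (⟨a, ha⟩ : Fin n) *
        FreeGroup.of (⟨a+1, h⟩ : Fin n))⁻¹) ∈ braidRels n :=
    Or.inl ⟨⟨a, ha⟩, ⟨a+1, h⟩, rfl, rfl⟩
  have := rel_one hr
  simp only [map_mul, map_inv, mul_inv_eq_one] at this
  simpa [σ, ha, h, PresentedGroup.of] using this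

lemma σ_comm {n a b : ℕ} (h : a + 2 ≤ b) :
    σ n a * σ n b = σ n b * σ n a := by
  by_cases hb : b < n
  · have ha : a < n := by omega
    have hr : (FreeGroup.of (⟨a, ha⟩ : Fin n) * FreeGroup.of (⟨b, hb⟩ : Fin n) *
        (FreeGroup.of (⟨b, hb⟩ : Fin n) * FreeGroup.of (⟨a, ha⟩ : Fin n))⁻¹) ∈ braidRels n :=
      Or.inr ⟨⟨a, ha⟩, ⟨b, hb⟩, h, rfl⟩
    have := rel_one hr
    simp only [map_mul, map_inv, mul_inv_eq_one] at this
    simpa [σ, ha, hb, PresentedGroup.of] using this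
  · simp [σ, hb]

/-- descending product `σ_{b-1} ⋯ σ_a` -/
def Pg (n a : ℕ) : ℕ → BraidGroup n
  | 0 => 1
  | (b+1) => if b < a then 1 else σ n b * Pg n a b

lemma Pg_succ {n a b : ℕ} (h : a ≤ b) : Pg n a (b+1) = σ n b * Pg n a b := by
  simp [Pg, Nat.not_lt.mpr h]

lemma Pg_le {n a b : ℕ} (h : b ≤ a) : Pg n a b = 1 := by
  cases b with
  | zero => rfl
  | succ b => simp [Pg, Nat.lt_of_succ_le h]

/-- σ_k commutes with Pg a b whenever k ≥ b+1 -/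
lemma σ_comm_Pg_high {n a k : ℕ} : ∀ {b : ℕ}, b + 1 ≤ k →
    σ n k * Pg n a b = Pg n a b * σ n k := by
  intro b
  induction b with
  | zero => intro _; simp [Pg]
  | succ b ih =>
    intro hk
    by_cases hab : b < a
    · simp [Pg, hab]
    · rw [Pg_succ (Nat.not_lt.mp hab), ← mul_assoc, ← σ_comm (by omega : b + 2 ≤ k),
        mul_assoc, ih (by omega), ← mul_assoc]

/-- σ_k commutes with Pg a b whenever k+2 ≤ a -/
lemma σ_comm_Pg_low {n a k : ℕ} (hk : k + 2 ≤ a) : ∀ {b : ℕ},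
    σ n k * Pg n a b = Pg n a b * σ n k := by
  intro b
  induction b with
  | zero => simp [Pg]
  | succ b ih =>
    by_cases hab : b < a
    · simp [Pg, hab]
    · rw [Pg_succ (Nat.not_lt.mp hab), ← mul_assoc, σ_comm (by omega : k + 2 ≤ b),
        mul_assoc, ih, ← mul_assoc]

/-- sliding: for a ≤ k, k+2 ≤ b ≤ n : σ_k · Pg a b = Pg a b · σ_{k+1} -/
lemma σ_slide {n a k : ℕ} (hak : a ≤ k) : ∀ {b : ℕ}, k + 2 ≤ b → b ≤ n →
    σ n k * Pg n a b = Pg n a b * σ n (k+1) := by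
  intro b
  induction b with
  | zero => omega
  | succ b ih =>
    intro hkb hbn
    rcases Nat.lt_or_ge (k+2) (b+1) with hlt | hge
    · -- b ≥ k+2 : commute σ_k past σ_b, then IH
      rw [Pg_succ (by omega)]
      calc σ n k * (σ n b * Pg n a b)
          = σ n b * (σ n k * Pg n a b) := by
            rw [← mul_assoc, σ_comm (by omega : k + 2 ≤ b), mul_assoc]
        _ = σ n b * (Pg n a b * σ n (k+1)) := by rw [ih (by omega) (by omega)]
        _ = σ n b * Pg n a b * σ n (k+1) := by rw [mul_assoc]
    · -- b+1 = k+2, i.e. b = k+1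
      have hb : b = k + 1 := by omega
      subst hb
      rw [Pg_succ (by omega), Pg_succ (by omega)]
      calc σ n k * (σ n (k+1) * (σ n k * Pg n a k))
          = (σ n k * σ n (k+1) * σ n k) * Pg n a k := by group
        _ = (σ n (k+1) * σ n k * σ n (k+1)) * Pg n a k := by
              rw [σ_braid (by omega : k + 1 < n)]
        _ = σ n (k+1) * σ n k * (σ n (k+1) * Pg n a k) := by group
        _ = σ n (k+1) * σ n k * (Pg n a k * σ n (k+1)) := by
              rw [σ_comm_Pg_high (by omega : k + 1 ≤ k + 1)]
        _ = σ n (k+1) * (σ n k * Pg n a k) * σ n (k+1) := by group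


lemma lem1 {n : ℕ} : ∀ j : ℕ,
    ((List.range j).map (fun k => σ n (j - k))).prod = Pg n 1 (j+1) := by
  intro j
  induction j with
  | zero => simp [Pg]
  | succ j ih =>
    rw [List.range_succ_eq_map, List.map_cons, List.map_map, List.prod_cons]
    have he : ((fun k => σ n (j + 1 - k)) ∘ Nat.succ) = fun k => σ n (j - k) := by
      funext k; simp only [Function.comp]; congr 1; omega
    rw [he, ih, Nat.sub_zero, ← Pg_succ (by omega)]

lemma lem2 {n : ℕ} : ∀ j : ℕ,
    ((List.range j).map (fun k => (σ n (1 + k))⁻¹)).prod = (Pg n 1 (j+1))⁻¹ := by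
  intro j
  induction j with
  | zero => simp [Pg]
  | succ j ih =>
    rw [List.range_succ, List.map_append, List.prod_append, ih]
    have : (1 : ℕ) + j = j + 1 := by omega
    simp only [List.map_cons, List.map_nil, List.prod_cons, List.prod_nil, this]
    rw [Pg_succ (by omega : 1 ≤ j + 1)]
    rw [mul_inv_rev, mul_one]

lemma Adef {n j : ℕ} (hj : 1 ≤ j) :
    A n 0 j = Pg n 1 j * (σ n 0)^2 * (Pg n 1 j)⁻¹ := by
  unfold A
  have h1 : j - 1 - 0 = j - 1 := by omega
  have h2 : j - 1 + 1 = j := by omega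
  rw [h1]
  have e1 : ((List.range (j-1)).map (fun k => σ n (j - 1 - k))).prod = Pg n 1 j := by
    have := lem1 (n := n) (j - 1); rwa [h2] at this
  have e2 : ((List.range (j-1)).map (fun k => (σ n (0 + 1 + k))⁻¹)).prod = (Pg n 1 j)⁻¹ := by
    have := lem2 (n := n) (j - 1); rw [h2] at this
    simpa using this
  rw [e1, e2]

lemma A_one {n : ℕ} : A n 0 1 = (σ n 0)^2 := by
  rw [Adef (le_refl 1), Pg_le (le_refl 1)]; group

lemma A_rec {n j : ℕ} (hj : 1 ≤ j) :
    A n 0 (j+1) = σ n j * A n 0 j * (σ n j)⁻¹ := by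
  rw [Adef (by omega), Adef hj, Pg_succ hj]
  simp [mul_assoc, mul_inv_rev]

/-- σ_m² · c_m = c_m · A_{0,m+1}, where c_m = Pg 0 m -/
lemma sq_c {n : ℕ} : ∀ {m : ℕ}, m < n →
    (σ n m)^2 * Pg n 0 m = Pg n 0 m * A n 0 (m+1) := by
  intro m
  induction m with
  | zero => intro _; simp [Pg, A_one]
  | succ m ih =>
    intro hm
    have hmn : m < n := by omega
    have key : (σ n m)⁻¹ * (σ n (m+1))^2 * σ n m
        = σ n (m+1) * (σ n m)^2 * (σ n (m+1))⁻¹ := by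
      have hb := σ_braid (hm : m + 1 < n)
      have h1 : (σ n m)⁻¹ * σ n (m+1) * σ n m = σ n (m+1) * σ n m * (σ n (m+1))⁻¹ := by
        calc (σ n m)⁻¹ * σ n (m+1) * σ n m
            = (σ n m)⁻¹ * (σ n (m+1) * σ n m * σ n (m+1)) * (σ n (m+1))⁻¹ := by group
          _ = (σ n m)⁻¹ * (σ n m * σ n (m+1) * σ n m) * (σ n (m+1))⁻¹ := by rw [← hb]
          _ = σ n (m+1) * σ n m * (σ n (m+1))⁻¹ := by group
      calc (σ n m)⁻¹ * (σ n (m+1))^2 * σ n m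
          = ((σ n m)⁻¹ * σ n (m+1) * σ n m) * ((σ n m)⁻¹ * σ n (m+1) * σ n m) := by
              simp only [pow_two]; group
        _ = (σ n (m+1) * σ n m * (σ n (m+1))⁻¹) * (σ n (m+1) * σ n m * (σ n (m+1))⁻¹) := by
              rw [h1]
        _ = σ n (m+1) * (σ n m)^2 * (σ n (m+1))⁻¹ := by simp only [pow_two]; group
    have hcm : (σ n (m+1))⁻¹ * Pg n 0 m = Pg n 0 m * (σ n (m+1))⁻¹ :=
      (Commute.inv_left (σ_comm_Pg_high (by omega : m + 1 ≤ m + 1))).eq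
    rw [Pg_succ (Nat.zero_le m)]
    calc (σ n (m+1))^2 * (σ n m * Pg n 0 m)
        = σ n m * ((σ n m)⁻¹ * (σ n (m+1))^2 * σ n m) * Pg n 0 m := by
          simp only [pow_two]; group
      _ = σ n m * (σ n (m+1) * (σ n m)^2 * (σ n (m+1))⁻¹) * Pg n 0 m := by rw [key]
      _ = σ n m * σ n (m+1) * (σ n m)^2 * ((σ n (m+1))⁻¹ * Pg n 0 m) := by
          simp only [pow_two]; group
      _ = σ n m * σ n (m+1) * (σ n m)^2 * (Pg n 0 m * (σ n (m+1))⁻¹) := by rw [hcm]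
      _ = σ n m * σ n (m+1) * ((σ n m)^2 * Pg n 0 m) * (σ n (m+1))⁻¹ := by
          simp only [pow_two]; group
      _ = σ n m * σ n (m+1) * (Pg n 0 m * A n 0 (m+1)) * (σ n (m+1))⁻¹ := by rw [ih hmn]
      _ = σ n m * (σ n (m+1) * Pg n 0 m) * (A n 0 (m+1)) * (σ n (m+1))⁻¹ := by group
      _ = σ n m * (Pg n 0 m * σ n (m+1)) * (A n 0 (m+1)) * (σ n (m+1))⁻¹ := by
            rw [σ_comm_Pg_high (by omega : m + 1 ≤ m + 1)]
      _ = σ n m * Pg n 0 m * (σ n (m+1) * A n 0 (m+1) * (σ n (m+1))⁻¹) := by group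
      _ = σ n m * Pg n 0 m * A n 0 (m+1+1) := by rw [← A_rec (by omega)]


section AbstractIdent
variable {G : Type*} [Group G] {s t : G}

lemma key1 (h : s*t*s = t*s*t) : t⁻¹ * s * t = s * t * s⁻¹ := by
  calc t⁻¹*s*t = t⁻¹*(s*t*s)*s⁻¹ := by group
    _ = t⁻¹*(t*s*t)*s⁻¹ := by rw [h]
    _ = s*t*s⁻¹ := by group

lemma key2 (h : s*t*s = t*s*t) : s⁻¹ * t * s = t * s * t⁻¹ := by
  calc s⁻¹*t*s = s⁻¹*(t*s*t)*t⁻¹ := by group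
    _ = s⁻¹*(s*t*s)*t⁻¹ := by rw [← h]
    _ = t*s*t⁻¹ := by group

lemma e1lem (h : s*t*s = t*s*t) : s * t^2 * s⁻¹ = t⁻¹ * s^2 * t := by
  calc s*t^2*s⁻¹ = (s*t*s⁻¹)*(s*t*s⁻¹) := by simp only [pow_two]; group
    _ = (t⁻¹*s*t)*(t⁻¹*s*t) := by rw [← key1 h]
    _ = t⁻¹*s^2*t := by simp only [pow_two]; group

lemma e2lem (h : s*t*s = t*s*t) : s⁻¹ * t^2 * s = t * s^2 * t⁻¹ := by
  calc s⁻¹*t^2*s = (s⁻¹*t*s)*(s⁻¹*t*s) := by simp only [pow_two]; group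
    _ = (t*s*t⁻¹)*(t*s*t⁻¹) := by rw [key2 h]
    _ = t*s^2*t⁻¹ := by simp only [pow_two]; group

lemma gI2 (h : s*t*s = t*s*t) :
    s⁻¹ * t^2 * s = t^2 * (s*t^2*s⁻¹) * (t^2)⁻¹ := by
  calc s⁻¹*t^2*s = t*s^2*t⁻¹ := e2lem h
    _ = t^2 * (t⁻¹*s^2*t) * (t^2)⁻¹ := by simp only [pow_two]; group
    _ = t^2 * (s*t^2*s⁻¹) * (t^2)⁻¹ := by rw [← e1lem h]

lemma conj_cons {u : G} (hyp : s⁻¹ * u * s = u * (s*u*s⁻¹) * u⁻¹) :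
    s * (s*u*s⁻¹) * s⁻¹ = (s*u*s⁻¹)⁻¹ * u * (s*u*s⁻¹) := by
  have h4 : u = (s*u*s⁻¹) * (s*(s*u*s⁻¹)*s⁻¹) * (s*u*s⁻¹)⁻¹ := by
    conv_lhs => rw [show u = s * (s⁻¹*u*s) * s⁻¹ from by group]
    rw [hyp]
    group
  calc s*(s*u*s⁻¹)*s⁻¹
      = (s*u*s⁻¹)⁻¹ * ((s*u*s⁻¹) * (s*(s*u*s⁻¹)*s⁻¹) * (s*u*s⁻¹)⁻¹) * (s*u*s⁻¹) := by
        group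
    _ = (s*u*s⁻¹)⁻¹ * u * (s*u*s⁻¹) := by rw [← h4]

lemma gI1 (h : s*t*s = t*s*t) :
    s * (s*t^2*s⁻¹) * s⁻¹ = (s*t^2*s⁻¹)⁻¹ * t^2 * (s*t^2*s⁻¹) :=
  conj_cons (gI2 h)

end AbstractIdent

/-- band conjugate: (Pg 1 m)⁻¹ σ_m (Pg 1 m) = v σ_1 v⁻¹ with v = Pg 2 (m+1) -/
lemma band_eq {n : ℕ} : ∀ {m : ℕ}, 1 ≤ m → m < n →
    (Pg n 1 m)⁻¹ * σ n m * Pg n 1 m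
      = Pg n 2 (m+1) * σ n 1 * (Pg n 2 (m+1))⁻¹ := by
  intro m
  induction m with
  | zero => omega
  | succ m ih =>
    intro _ hm1
    rcases Nat.lt_or_ge m 1 with hm0 | hm0
    · -- m = 0 : base case m+1 = 1
      have : m = 0 := by omega
      subst this
      rw [Pg_le (le_refl 1), Pg_le (le_refl 2)]
      group
    · have hmn : m < n := by omega
      have h1 : (σ n m)⁻¹ * σ n (m+1) * σ n m = σ n (m+1) * σ n m * (σ n (m+1))⁻¹ := by
        have hb := σ_braid (hm1 : m + 1 < n)
        calc (σ n m)⁻¹ * σ n (m+1) * σ n m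
            = (σ n m)⁻¹ * (σ n (m+1) * σ n m * σ n (m+1)) * (σ n (m+1))⁻¹ := by group
          _ = (σ n m)⁻¹ * (σ n m * σ n (m+1) * σ n m) * (σ n (m+1))⁻¹ := by rw [← hb]
          _ = σ n (m+1) * σ n m * (σ n (m+1))⁻¹ := by group
      have hc : σ n (m+1) * Pg n 1 m = Pg n 1 m * σ n (m+1) :=
        σ_comm_Pg_high (by omega)
      have hc' : (σ n (m+1))⁻¹ * Pg n 1 m = Pg n 1 m * (σ n (m+1))⁻¹ :=
        (Commute.inv_left hc).eq
      rw [Pg_succ (hm0 : 1 ≤ m), Pg_succ (by omega : 2 ≤ m + 1)]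
      calc (σ n m * Pg n 1 m)⁻¹ * σ n (m+1) * (σ n m * Pg n 1 m)
          = (Pg n 1 m)⁻¹ * ((σ n m)⁻¹ * σ n (m+1) * σ n m) * Pg n 1 m := by group
        _ = (Pg n 1 m)⁻¹ * (σ n (m+1) * σ n m * (σ n (m+1))⁻¹) * Pg n 1 m := by rw [h1]
        _ = (Pg n 1 m)⁻¹ * σ n (m+1) * σ n m * ((σ n (m+1))⁻¹ * Pg n 1 m) := by group
        _ = (Pg n 1 m)⁻¹ * σ n (m+1) * σ n m * (Pg n 1 m * (σ n (m+1))⁻¹) := by rw [hc']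
        _ = (Pg n 1 m)⁻¹ * (σ n (m+1) * Pg n 1 m) * ((Pg n 1 m)⁻¹ * σ n m * Pg n 1 m)
              * (σ n (m+1))⁻¹ := by group
        _ = (Pg n 1 m)⁻¹ * (Pg n 1 m * σ n (m+1)) * ((Pg n 1 m)⁻¹ * σ n m * Pg n 1 m)
              * (σ n (m+1))⁻¹ := by rw [hc]
        _ = σ n (m+1) * ((Pg n 1 m)⁻¹ * σ n m * Pg n 1 m) * (σ n (m+1))⁻¹ := by group
        _ = σ n (m+1) * (Pg n 2 (m+1) * σ n 1 * (Pg n 2 (m+1))⁻¹) * (σ n (m+1))⁻¹ := by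
              rw [ih hm0 hmn]
        _ = σ n (m+1) * Pg n 2 (m+1) * σ n 1 * (σ n (m+1) * Pg n 2 (m+1))⁻¹ := by group

/-- the band generator -/
def tband (n m : ℕ) : BraidGroup n := Pg n 1 m * σ n 0 * (Pg n 1 m)⁻¹

lemma tband_sq {n m : ℕ} (hm : 1 ≤ m) : (tband n m)^2 = A n 0 m := by
  rw [tband, conj_pow, Adef hm]

lemma tband_braid {n m : ℕ} (h1 : 1 ≤ m) (h2 : m < n) :
    σ n m * tband n m * σ n m = tband n m * σ n m * tband n m := by
  have hv : σ n 0 * Pg n 2 (m+1) = Pg n 2 (m+1) * σ n 0 :=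
    σ_comm_Pg_low (by omega)
  have hv' : σ n 0 * (Pg n 2 (m+1))⁻¹ = (Pg n 2 (m+1))⁻¹ * σ n 0 :=
    (Commute.inv_right hv).eq
  have hband := band_eq h1 h2
  have hbraid01 : σ n 1 * σ n 0 * σ n 1 = σ n 0 * σ n 1 * σ n 0 := by
    have := σ_braid (show (0:ℕ) + 1 < n by omega)
    simpa using this.symm
  rw [tband]
  calc σ n m * (Pg n 1 m * σ n 0 * (Pg n 1 m)⁻¹) * σ n m
      = Pg n 1 m * (((Pg n 1 m)⁻¹ * σ n m * Pg n 1 m) * σ n 0 *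
          ((Pg n 1 m)⁻¹ * σ n m * Pg n 1 m)) * (Pg n 1 m)⁻¹ := by group
    _ = Pg n 1 m * ((Pg n 2 (m+1) * σ n 1 * (Pg n 2 (m+1))⁻¹) * σ n 0 *
          (Pg n 2 (m+1) * σ n 1 * (Pg n 2 (m+1))⁻¹)) * (Pg n 1 m)⁻¹ := by rw [hband]
    _ = Pg n 1 m * (Pg n 2 (m+1) * σ n 1 * ((Pg n 2 (m+1))⁻¹ * σ n 0) *
          Pg n 2 (m+1) * σ n 1 * (Pg n 2 (m+1))⁻¹) * (Pg n 1 m)⁻¹ := by group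
    _ = Pg n 1 m * (Pg n 2 (m+1) * σ n 1 * (σ n 0 * (Pg n 2 (m+1))⁻¹) *
          Pg n 2 (m+1) * σ n 1 * (Pg n 2 (m+1))⁻¹) * (Pg n 1 m)⁻¹ := by rw [hv']
    _ = Pg n 1 m * (Pg n 2 (m+1) * (σ n 1 * σ n 0 * σ n 1) * (Pg n 2 (m+1))⁻¹) *
          (Pg n 1 m)⁻¹ := by group
    _ = Pg n 1 m * (Pg n 2 (m+1) * (σ n 0 * σ n 1 * σ n 0) * (Pg n 2 (m+1))⁻¹) *
          (Pg n 1 m)⁻¹ := by rw [hbraid01]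
    _ = Pg n 1 m * ((Pg n 2 (m+1) * σ n 0) * σ n 1 * (σ n 0 * (Pg n 2 (m+1))⁻¹)) *
          (Pg n 1 m)⁻¹ := by group
    _ = Pg n 1 m * ((σ n 0 * Pg n 2 (m+1)) * σ n 1 * ((Pg n 2 (m+1))⁻¹ * σ n 0)) *
          (Pg n 1 m)⁻¹ := by rw [← hv, hv']
    _ = (Pg n 1 m * σ n 0 * (Pg n 1 m)⁻¹) * ((Pg n 1 m) * (Pg n 2 (m+1) * σ n 1 *
          (Pg n 2 (m+1))⁻¹) * (Pg n 1 m)⁻¹) * (Pg n 1 m * σ n 0 * (Pg n 1 m)⁻¹) := by group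
    _ = (Pg n 1 m * σ n 0 * (Pg n 1 m)⁻¹) * ((Pg n 1 m) * ((Pg n 1 m)⁻¹ * σ n m *
          Pg n 1 m) * (Pg n 1 m)⁻¹) * (Pg n 1 m * σ n 0 * (Pg n 1 m)⁻¹) := by rw [hband]
    _ = Pg n 1 m * σ n 0 * (Pg n 1 m)⁻¹ * σ n m * (Pg n 1 m * σ n 0 * (Pg n 1 m)⁻¹) := by
          group


def SVset (n : ℕ) : Set (BraidGroup n) := {x | ∃ j : ℕ, 1 ≤ j ∧ j ≤ n ∧ x = A n 0 j}

def BnSet (n : ℕ) : Set (BraidGroup n) := {x | ∃ k : ℕ, 1 ≤ k ∧ k ≤ n - 1 ∧ x = σ n k}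

lemma A_mem_SV {n j : ℕ} (h1 : 1 ≤ j) (h2 : j ≤ n) : A n 0 j ∈ SVset n := ⟨j, h1, h2, rfl⟩

lemma σ_comm_A {n k j : ℕ} (hj : 1 ≤ j) (hjn : j ≤ n)
    (hcase : (1 ≤ k ∧ k + 2 ≤ j) ∨ j + 1 ≤ k) :
    σ n k * A n 0 j = A n 0 j * σ n k := by
  rcases hcase with ⟨hk1, hk2⟩ | hk
  · have hs : σ n k * Pg n 1 j = Pg n 1 j * σ n (k+1) := σ_slide hk1 hk2 hjn
    have hs' : σ n (k+1) * (Pg n 1 j)⁻¹ = (Pg n 1 j)⁻¹ * σ n k := by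
      calc σ n (k+1) * (Pg n 1 j)⁻¹
          = (Pg n 1 j)⁻¹ * (Pg n 1 j * σ n (k+1)) * (Pg n 1 j)⁻¹ := by group
        _ = (Pg n 1 j)⁻¹ * (σ n k * Pg n 1 j) * (Pg n 1 j)⁻¹ := by rw [← hs]
        _ = (Pg n 1 j)⁻¹ * σ n k := by group
    have h0c : Commute (σ n (k+1)) (σ n 0) := (σ_comm (show 0 + 2 ≤ k + 1 by omega)).symm
    have h0 : σ n (k+1) * (σ n 0)^2 = (σ n 0)^2 * σ n (k+1) := (h0c.pow_right 2).eq
    calc σ n k * A n 0 j = σ n k * (Pg n 1 j * (σ n 0)^2 * (Pg n 1 j)⁻¹) := by rw [Adef hj]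
      _ = (σ n k * Pg n 1 j) * (σ n 0)^2 * (Pg n 1 j)⁻¹ := by group
      _ = (Pg n 1 j * σ n (k+1)) * (σ n 0)^2 * (Pg n 1 j)⁻¹ := by rw [hs]
      _ = Pg n 1 j * (σ n (k+1) * (σ n 0)^2) * (Pg n 1 j)⁻¹ := by group
      _ = Pg n 1 j * ((σ n 0)^2 * σ n (k+1)) * (Pg n 1 j)⁻¹ := by rw [h0]
      _ = Pg n 1 j * (σ n 0)^2 * (σ n (k+1) * (Pg n 1 j)⁻¹) := by group
      _ = Pg n 1 j * (σ n 0)^2 * ((Pg n 1 j)⁻¹ * σ n k) := by rw [hs']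
      _ = (Pg n 1 j * (σ n 0)^2 * (Pg n 1 j)⁻¹) * σ n k := by group
      _ = A n 0 j * σ n k := by rw [← Adef hj]
  · have hP : Commute (σ n k) (Pg n 1 j) := σ_comm_Pg_high (by omega)
    have h0 : Commute (σ n k) (σ n 0) := (σ_comm (show 0 + 2 ≤ k by omega)).symm
    have hA : Commute (σ n k) (A n 0 j) := by
      rw [Adef hj]
      exact (hP.mul_right (h0.pow_right 2)).mul_right hP.inv_right
    exact hA.eq

lemma A_conj_bwd {n j : ℕ} (h1 : 1 ≤ j) (h2 : j < n) :
    (σ n j)⁻¹ * A n 0 j * σ n j = A n 0 j * A n 0 (j+1) * (A n 0 j)⁻¹ := by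
  have h := gI2 (tband_braid h1 h2)
  rw [tband_sq h1] at h
  rw [h, show σ n j * A n 0 j * (σ n j)⁻¹ = A n 0 (j+1) from (A_rec h1).symm]

lemma A_conj_fwd2 {n j : ℕ} (h1 : 1 ≤ j) (h2 : j < n) :
    σ n j * A n 0 (j+1) * (σ n j)⁻¹ = (A n 0 (j+1))⁻¹ * A n 0 j * A n 0 (j+1) := by
  have h := gI1 (tband_braid h1 h2)
  rw [tband_sq h1] at h
  rw [show σ n j * A n 0 j * (σ n j)⁻¹ = A n 0 (j+1) from (A_rec h1).symm] at h
  exact h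

lemma conj_gen_mem {n k : ℕ} (hk1 : 1 ≤ k) (hkn : k < n) {x : BraidGroup n}
    (hx : x ∈ SVset n) :
    σ n k * x * (σ n k)⁻¹ ∈ Subgroup.closure (SVset n) ∧
    (σ n k)⁻¹ * x * σ n k ∈ Subgroup.closure (SVset n) := by
  obtain ⟨j, hj1, hjn, rfl⟩ := hx
  by_cases hkj : k = j
  · subst hkj
    constructor
    · rw [show σ n k * A n 0 k * (σ n k)⁻¹ = A n 0 (k+1) from (A_rec hj1).symm]
      exact Subgroup.subset_closure (A_mem_SV (by omega) (by omega))
    · rw [A_conj_bwd hj1 hkn]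
      refine mul_mem (mul_mem ?_ ?_) (inv_mem ?_) <;>
        exact Subgroup.subset_closure (A_mem_SV (by omega) (by omega))
  · by_cases hkj1 : j = k + 1
    · subst hkj1
      constructor
      · rw [A_conj_fwd2 hk1 hkn]
        refine mul_mem (mul_mem (inv_mem ?_) ?_) ?_ <;>
          exact Subgroup.subset_closure (A_mem_SV (by omega) (by omega))
      · have : (σ n k)⁻¹ * A n 0 (k+1) * σ n k = A n 0 k := by
          rw [A_rec (hk1 : 1 ≤ k)]
          group
        rw [this]
        exact Subgroup.subset_closure (A_mem_SV (by omega) (by omega))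
    · have hc : σ n k * A n 0 j = A n 0 j * σ n k :=
        σ_comm_A hj1 hjn (by omega)
      have hmem := Subgroup.subset_closure (A_mem_SV hj1 hjn)
      constructor
      · rw [hc, mul_inv_cancel_right]; exact hmem
      · have : (σ n k)⁻¹ * A n 0 j * σ n k = A n 0 j := by
          calc (σ n k)⁻¹ * A n 0 j * σ n k = (σ n k)⁻¹ * (σ n k * A n 0 j) := by
                rw [hc]; group
            _ = A n 0 j := by group
        rw [this]; exact hmem

lemma conj_mem_closure {G : Type*} [Group G] {S : Set G} {g : G}
    (hg : ∀ x ∈ S, g * x * g⁻¹ ∈ Subgroup.closure S) :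
    ∀ v ∈ Subgroup.closure S, g * v * g⁻¹ ∈ Subgroup.closure S := by
  intro v hv
  induction hv using Subgroup.closure_induction with
  | mem x hx => exact hg x hx
  | one => simpa using one_mem _
  | mul x y hx hy ihx ihy =>
    have h := mul_mem ihx ihy
    rwa [show g*x*g⁻¹*(g*y*g⁻¹) = g*(x*y)*g⁻¹ by group] at h
  | inv x hx ihx =>
    have h := inv_mem ihx
    rwa [show (g*x*g⁻¹)⁻¹ = g*x⁻¹*g⁻¹ by group] at h

lemma σ_mem_normalizer {n k : ℕ} (hk1 : 1 ≤ k) (hkn : k < n) :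
    σ n k ∈ Subgroup.normalizer (Subgroup.closure (SVset n) : Set (BraidGroup n)) := by
  rw [Subgroup.mem_normalizer_iff]
  intro h
  constructor
  · exact fun hh => conj_mem_closure (fun x hx => (conj_gen_mem hk1 hkn hx).1) h hh
  · intro hh
    have := conj_mem_closure (g := (σ n k)⁻¹)
      (fun x hx => by simpa using (conj_gen_mem hk1 hkn hx).2) _ hh
    rwa [show (σ n k)⁻¹ * (σ n k * h * (σ n k)⁻¹) * ((σ n k)⁻¹)⁻¹ = h by group] at this

lemma Bn_le_normalizer {n : ℕ} :
    Subgroup.closure (BnSet n) ≤ Subgroup.normalizer (Subgroup.closure (SVset n) : Set (BraidGroup n)) := by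
  rw [Subgroup.closure_le]
  rintro x ⟨k, hk1, hk2, rfl⟩
  exact σ_mem_normalizer hk1 (by omega)


/-! ### permutation part -/

def sw {n : ℕ} (k : Fin n) : Equiv.Perm (Fin (n+1)) := Equiv.swap k.castSucc k.succ

lemma sw_val {n : ℕ} (k : Fin n) (i : Fin (n+1)) :
    ((sw k) i : ℕ) = if (i : ℕ) = (k : ℕ) then (k : ℕ) + 1
      else if (i : ℕ) = (k : ℕ) + 1 then (k : ℕ) else (i : ℕ) := by
  by_cases h1 : i = k.castSucc
  · subst h1
    rw [sw, Equiv.swap_apply_left]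
    simp
  · by_cases h2 : i = k.succ
    · subst h2
      rw [sw, Equiv.swap_apply_right]
      have : ((k.succ : Fin (n+1)) : ℕ) = (k : ℕ) + 1 := Fin.val_succ k
      simp [this]
    · rw [sw, Equiv.swap_apply_of_ne_of_ne h1 h2]
      rw [if_neg (fun hv => h1 (Fin.ext (by simpa using hv))),
        if_neg (fun hv => h2 (Fin.ext (by simpa using hv)))]

lemma sw_inv {n : ℕ} (k : Fin n) : (sw k)⁻¹ = sw k := by
  rw [sw, Equiv.swap_inv]

set_option maxHeartbeats 2000000 in
lemma sw_braid {n : ℕ} {k j : Fin n} (h : (k : ℕ) + 1 = (j : ℕ)) :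
    sw k * sw j * sw k = sw j * sw k * sw j := by
  have hk := k.isLt; have hj := j.isLt
  ext i
  have hvi := i.isLt
  simp only [Equiv.Perm.mul_apply]
  simp only [sw_val]
  split_ifs <;> omega

set_option maxHeartbeats 2000000 in
lemma sw_comm {n : ℕ} {k j : Fin n} (h : (k : ℕ) + 2 ≤ (j : ℕ)) :
    sw k * sw j = sw j * sw k := by
  have hk := k.isLt; have hj := j.isLt
  ext i
  have hvi := i.isLt
  simp only [Equiv.Perm.mul_apply]
  simp only [sw_val]
  split_ifs <;> omega

def swn (a y : ℕ) : ℕ := if y = a then a + 1 else if y = a + 1 then a else y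

lemma sw_val' {n : ℕ} (k : Fin n) (i : Fin (n+1)) : ((sw k) i : ℕ) = swn (k : ℕ) (i : ℕ) := by
  rw [sw_val]; rfl

abbrev Nfun (n : ℕ) := Fin (n+1) → BraidGroup (n-1)

def permAct (n : ℕ) : Equiv.Perm (Fin (n+1)) →* MulAut (Nfun n) where
  toFun e :=
    { toFun := fun f i => f (e⁻¹ i)
      invFun := fun f i => f (e i)
      left_inv := fun f => by funext i; simp
      right_inv := fun f => by funext i; simp
      map_mul' := fun f g => rfl }
  map_one' := by ext f i; simp
  map_mul' e1 e2 := by ext f i; simp [MulAut.mul_apply, mul_inv_rev]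

lemma permAct_apply {n : ℕ} (e : Equiv.Perm (Fin (n+1))) (f : Nfun n) (i : Fin (n+1)) :
    (permAct n e) f i = f (e⁻¹ i) := rfl

def fnat (n k i : ℕ) : BraidGroup (n-1) :=
  if i < k then σ (n-1) (k-1) else if k+1 < i then σ (n-1) k else 1

def gens (n : ℕ) (k : Fin n) :
    SemidirectProduct (Nfun n) (Equiv.Perm (Fin (n+1))) (permAct n) :=
  ⟨fun i => fnat n (k : ℕ) (i : ℕ), sw k⟩

lemma swn_eval {a y z : ℕ}
    (h : (y = a ∧ z = a+1) ∨ (y = a+1 ∧ z = a) ∨ (y ≠ a ∧ y ≠ a+1 ∧ z = y)) :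
    swn a y = z := by
  unfold swn; split_ifs <;> omega
lemma fnat_lt {n a y : ℕ} (h : y < a) : fnat n a y = σ (n-1) (a-1) := by
  unfold fnat; rw [if_pos h]
lemma fnat_gt {n a y : ℕ} (h : a + 1 < y) : fnat n a y = σ (n-1) a := by
  unfold fnat; rw [if_neg (by omega), if_pos h]
lemma fnat_mid {n a y : ℕ} (h1 : ¬ y < a) (h2 : ¬ a+1 < y) : fnat n a y = 1 := by
  unfold fnat; rw [if_neg h1, if_neg h2]

lemma fnat_braid {n a y : ℕ} (han : a + 1 < n) (hy : y ≤ n) :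
    fnat n a y * fnat n (a+1) (swn a y) * fnat n a (swn (a+1) (swn a y)) =
    fnat n (a+1) y * fnat n a (swn (a+1) y) * fnat n (a+1) (swn a (swn (a+1) y)) := by
  by_cases h1 : y < a
  · have hb := σ_braid (n := n-1) (a := a-1) (by omega)
    rw [show a - 1 + 1 = a from by omega] at hb
    rw [show swn a y = y from swn_eval (by omega),
      show swn (a+1) y = y from swn_eval (by omega),
      show swn a y = y from swn_eval (by omega),
      show fnat n a y = σ (n-1) (a-1) from fnat_lt h1,
      show fnat n (a+1) y = σ (n-1) (a+1-1) from fnat_lt (by omega),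
      show a + 1 - 1 = a from by omega]
    exact hb
  · by_cases h2 : y = a
    · rw [h2]
      rw [show swn (a+1) a = a from swn_eval (by omega),
        show swn a a = a+1 from swn_eval (by omega),
        show swn (a+1) (a+1) = a+2 from swn_eval (by omega),
        show fnat n a a = 1 from fnat_mid (by omega) (by omega),
        show fnat n (a+1) (a+1) = 1 from fnat_mid (by omega) (by omega),
        show fnat n a (a+2) = σ (n-1) a from fnat_gt (by omega),
        show fnat n (a+1) a = σ (n-1) (a+1-1) from fnat_lt (by omega),
        show a + 1 - 1 = a from by omega]
      group
    · by_cases h3 : y = a + 1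
      · subst h3
        rw [show swn a (a+1) = a from swn_eval (by omega),
          show swn (a+1) a = a from swn_eval (by omega),
          show swn (a+1) (a+1) = a+2 from swn_eval (by omega),
          show swn a (a+2) = a+2 from swn_eval (by omega),
          show fnat n a (a+1) = 1 from fnat_mid (by omega) (by omega),
          show fnat n (a+1) a = σ (n-1) (a+1-1) from fnat_lt (by omega),
          show fnat n a a = 1 from fnat_mid (by omega) (by omega),
          show fnat n (a+1) (a+1) = 1 from fnat_mid (by omega) (by omega),
          show fnat n a (a+2) = σ (n-1) a from fnat_gt (by omega),
          show fnat n (a+1) (a+2) = 1 from fnat_mid (by omega) (by omega),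
          show a + 1 - 1 = a from by omega]
      · by_cases h4 : y = a + 2
        · subst h4
          rw [show swn a (a+2) = a+2 from swn_eval (by omega),
            show swn (a+1) (a+2) = a+1 from swn_eval (by omega),
            show swn a (a+1) = a from swn_eval (by omega),
            show fnat n a (a+2) = σ (n-1) a from fnat_gt (by omega),
            show fnat n (a+1) (a+2) = 1 from fnat_mid (by omega) (by omega),
            show fnat n a (a+1) = 1 from fnat_mid (by omega) (by omega),
            show fnat n (a+1) a = σ (n-1) (a+1-1) from fnat_lt (by omega),
            show a + 1 - 1 = a from by omega]
          group
        · have h5 : a + 2 < y := by omega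
          have hb := σ_braid (n := n-1) (a := a) (by omega)
          rw [show swn a y = y from swn_eval (by omega),
            show swn (a+1) y = y from swn_eval (by omega),
            show swn a y = y from swn_eval (by omega),
            show fnat n a y = σ (n-1) a from fnat_gt (by omega),
            show fnat n (a+1) y = σ (n-1) (a+1) from fnat_gt (by omega)]
          exact hb

lemma fnat_comm {n a c y : ℕ} (hac : a + 2 ≤ c) (hc : c < n) (hy : y ≤ n) :
    fnat n a y * fnat n c (swn a y) = fnat n c y * fnat n a (swn c y) := by
  by_cases h1 : y < a
  · rw [show swn a y = y from swn_eval (by omega),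
      show swn c y = y from swn_eval (by omega),
      show fnat n a y = σ (n-1) (a-1) from fnat_lt h1,
      show fnat n c y = σ (n-1) (c-1) from fnat_lt (by omega)]
    exact σ_comm (by omega)
  · by_cases h2 : y = a
    · rw [h2]
      rw [show swn a a = a+1 from swn_eval (by omega),
        show swn c a = a from swn_eval (by omega),
        show fnat n a a = 1 from fnat_mid (by omega) (by omega),
        show fnat n c (a+1) = σ (n-1) (c-1) from fnat_lt (by omega),
        show fnat n c a = σ (n-1) (c-1) from fnat_lt (by omega)]
      group
    · by_cases h2b : y = a + 1
      · subst h2b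
        rw [show swn a (a+1) = a from swn_eval (by omega),
          show swn c (a+1) = a+1 from swn_eval (by omega),
          show fnat n a (a+1) = 1 from fnat_mid (by omega) (by omega),
          show fnat n c a = σ (n-1) (c-1) from fnat_lt (by omega),
          show fnat n c (a+1) = σ (n-1) (c-1) from fnat_lt (by omega)]
        group
      · by_cases h3 : y < c
        · have h3' : a + 1 < y := by omega
          rw [show swn a y = y from swn_eval (by omega),
            show swn c y = y from swn_eval (by omega),
            show fnat n a y = σ (n-1) a from fnat_gt (by omega),
            show fnat n c y = σ (n-1) (c-1) from fnat_lt (by omega)]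
          exact σ_comm (by omega)
        · by_cases h4 : y = c
          · rw [h4]
            rw [show swn a c = c from swn_eval (by omega),
              show swn c c = c+1 from swn_eval (by omega),
              show fnat n a c = σ (n-1) a from fnat_gt (by omega),
              show fnat n c c = 1 from fnat_mid (by omega) (by omega),
              show fnat n a (c+1) = σ (n-1) a from fnat_gt (by omega)]
            group
          · by_cases h4b : y = c + 1
            · subst h4b
              rw [show swn a (c+1) = c+1 from swn_eval (by omega),
                show swn c (c+1) = c from swn_eval (by omega),
                show fnat n a (c+1) = σ (n-1) a from fnat_gt (by omega),
                show fnat n c (c+1) = 1 from fnat_mid (by omega) (by omega),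
                show fnat n a c = σ (n-1) a from fnat_gt (by omega)]
              group
            · have h5 : c + 1 < y := by omega
              rw [show swn a y = y from swn_eval (by omega),
                show swn c y = y from swn_eval (by omega),
                show fnat n a y = σ (n-1) a from fnat_gt (by omega),
                show fnat n c y = σ (n-1) c from fnat_gt (by omega)]
              exact σ_comm (by omega)

lemma theta_rel {n : ℕ} : ∀ r ∈ braidRels n, FreeGroup.lift (gens n) r = 1 := by
  rintro r hr
  rcases hr with ⟨i, j, hij, rfl⟩ | ⟨i, j, hij, rfl⟩
  · have hin := i.isLt; have hjn := j.isLt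
    simp only [map_mul, map_inv]
    rw [mul_inv_eq_one]
    simp only [FreeGroup.lift_apply_of]
    refine SemidirectProduct.ext ?_ ?_
    · funext x
      have hx : (x : ℕ) ≤ n := by omega
      simp only [SemidirectProduct.mul_left, SemidirectProduct.mul_right, gens,
        Pi.mul_apply, permAct_apply, mul_inv_rev, sw_inv, Equiv.Perm.mul_apply]
      simp only [sw_val']
      rw [← hij]
      exact fnat_braid (by omega) hx
    · simp only [SemidirectProduct.mul_right, gens]
      exact sw_braid hij
  · have hin := i.isLt; have hjn := j.isLt
    simp only [map_mul, map_inv]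
    rw [mul_inv_eq_one]
    simp only [FreeGroup.lift_apply_of]
    refine SemidirectProduct.ext ?_ ?_
    · funext x
      have hx : (x : ℕ) ≤ n := by omega
      simp only [SemidirectProduct.mul_left, SemidirectProduct.mul_right, gens,
        Pi.mul_apply, permAct_apply, mul_inv_rev, sw_inv, Equiv.Perm.mul_apply]
      simp only [sw_val']
      exact fnat_comm hij (by omega) hx
    · simp only [SemidirectProduct.mul_right, gens]
      exact sw_comm hij


/-! ### the deletion homomorphism and the permutation homomorphism -/

def Θn (n : ℕ) : BraidGroup n →*
    SemidirectProduct (Nfun n) (Equiv.Perm (Fin (n+1))) (permAct n) :=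
  PresentedGroup.toGroup theta_rel

def πn (n : ℕ) : BraidGroup n →* Equiv.Perm (Fin (n+1)) :=
  SemidirectProduct.rightHom.comp (Θn n)

lemma πn_of {n : ℕ} (i : Fin n) : πn n (PresentedGroup.of i) = sw i := by
  simp only [πn, MonoidHom.comp_apply, Θn, PresentedGroup.toGroup.of]
  rfl

lemma πn_σ {n k : ℕ} (hk : k < n) : πn n (σ n k) = sw ⟨k, hk⟩ := by
  rw [σ, dif_pos hk, πn_of]

lemma πn_σ_apply_val {n k : ℕ} (hk : k < n) (x : Fin (n+1)) :
    ((πn n (σ n k)) x : ℕ) = swn k (x : ℕ) := by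
  rw [πn_σ hk, sw_val']

lemma fix0_σ {n k : ℕ} (hk1 : 1 ≤ k) : πn n (σ n k) (0 : Fin (n+1)) = 0 := by
  by_cases hk : k < n
  · apply Fin.ext
    rw [πn_σ_apply_val hk]
    simp only [Fin.val_zero]
    unfold swn
    rw [if_neg (by omega), if_neg (by omega)]
  · rw [σ, dif_neg hk]; simp

lemma fix0_mul {n : ℕ} {a b : BraidGroup n} (ha : πn n a 0 = 0) (hb : πn n b 0 = 0) :
    πn n (a * b) (0 : Fin (n+1)) = 0 := by
  rw [map_mul, Equiv.Perm.mul_apply, hb, ha]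

lemma fix0_inv {n : ℕ} {a : BraidGroup n} (ha : πn n a 0 = 0) :
    πn n a⁻¹ (0 : Fin (n+1)) = 0 := by
  rw [map_inv]
  conv_lhs => rw [← ha]
  exact Equiv.symm_apply_apply _ _

lemma fix0_Pg {n a : ℕ} (ha : 1 ≤ a) : ∀ {b : ℕ}, πn n (Pg n a b) (0 : Fin (n+1)) = 0 := by
  intro b
  induction b with
  | zero => simp [Pg]
  | succ b ih =>
    by_cases hab : b < a
    · simp [Pg, hab]
    · rw [Pg_succ (by omega)]
      exact fix0_mul (fix0_σ (by omega)) ih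

lemma πn_σ0_sq {n : ℕ} : πn n ((σ n 0)^2) = 1 := by
  by_cases h0 : 0 < n
  · rw [map_pow, πn_σ h0, sw, pow_two, Equiv.swap_mul_self]
  · have : σ n 0 = 1 := by rw [σ, dif_neg h0]
    rw [this]; simp

lemma πn_A {n j : ℕ} (hj : 1 ≤ j) : πn n (A n 0 j) = 1 := by
  rw [Adef hj, map_mul, map_mul, map_inv, πn_σ0_sq]
  group

/-! ### the shift homomorphism -/

lemma sh_rel {n : ℕ} : ∀ r ∈ braidRels (n-1),
    FreeGroup.lift (fun m : Fin (n-1) => σ n ((m : ℕ)+1)) r = 1 := by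
  rintro r (⟨i, j, hij, rfl⟩ | ⟨i, j, hij, rfl⟩) <;>
    have hin := i.isLt <;> have hjn := j.isLt <;> simp only [map_mul, map_inv] <;>
    rw [mul_inv_eq_one] <;> simp only [FreeGroup.lift_apply_of]
  · rw [show (j : ℕ) + 1 = ((i : ℕ) + 1) + 1 from by omega]
    exact σ_braid (by omega)
  · exact σ_comm (by omega)

def sh (n : ℕ) : BraidGroup (n-1) →* BraidGroup n := PresentedGroup.toGroup sh_rel

/-! ### the retraction ρ -/

def ρf (n : ℕ) (b : BraidGroup n) : BraidGroup n := sh n ((Θn n b).left 0)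

lemma Θn_right {n : ℕ} (b : BraidGroup n) : (Θn n b).right = πn n b := rfl

lemma ρf_mul {n : ℕ} {a b : BraidGroup n} (ha : πn n a 0 = 0) :
    ρf n (a * b) = ρf n a * ρf n b := by
  unfold ρf
  rw [map_mul, SemidirectProduct.mul_left, Pi.mul_apply, permAct_apply]
  have h0 : ((Θn n a).right)⁻¹ (0 : Fin (n+1)) = 0 := by
    rw [Θn_right]
    conv_lhs => rw [← ha]
    exact Equiv.symm_apply_apply _ _
  rw [h0, map_mul]

lemma ρf_one {n : ℕ} : ρf n 1 = 1 := by
  unfold ρf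
  rw [map_one]
  have : ((1 : SemidirectProduct (Nfun n) (Equiv.Perm (Fin (n+1))) (permAct n)).left 0) = 1 :=
    rfl
  rw [this, map_one]

lemma ρf_inv {n : ℕ} {a : BraidGroup n} (ha : πn n a 0 = 0) :
    ρf n a⁻¹ = (ρf n a)⁻¹ := by
  have h := ρf_mul (a := a⁻¹) (b := a) (fix0_inv ha)
  rw [inv_mul_cancel, ρf_one] at h
  exact eq_inv_of_mul_eq_one_left h.symm

lemma ρf_σ {n k : ℕ} (hk1 : 1 ≤ k) (hkn : k < n) : ρf n (σ n k) = σ n k := by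
  unfold ρf
  rw [σ, dif_pos hkn]
  have h1 : (Θn n (PresentedGroup.of ⟨k, hkn⟩)).left 0 = fnat n k 0 := by
    rw [Θn, PresentedGroup.toGroup.of]
    rfl
  rw [h1, show fnat n k 0 = σ (n-1) (k-1) from fnat_lt (by omega)]
  have hk2 : k - 1 < n - 1 := by omega
  rw [show σ (n-1) (k-1) = PresentedGroup.of ⟨k-1, hk2⟩ from by rw [σ, dif_pos hk2]]
  rw [sh, PresentedGroup.toGroup.of]
  show σ n (k - 1 + 1) = PresentedGroup.of ⟨k, hkn⟩
  rw [show k - 1 + 1 = k from by omega, σ, dif_pos hkn]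

lemma ρf_σ0_sq {n : ℕ} : ρf n ((σ n 0)^2) = 1 := by
  by_cases h0 : 0 < n
  · unfold ρf
    rw [pow_two, map_mul, SemidirectProduct.mul_left, Pi.mul_apply, permAct_apply]
    rw [σ, dif_pos h0]
    have h1 : (Θn n (PresentedGroup.of ⟨0, h0⟩)).left = fun i : Fin (n+1) => fnat n 0 (i : ℕ) := by
      rw [Θn, PresentedGroup.toGroup.of]
      rfl
    have h2 : (Θn n (PresentedGroup.of ⟨0, h0⟩)).right = sw ⟨0, h0⟩ := by
      rw [Θn, PresentedGroup.toGroup.of]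
      rfl
    rw [h1, h2, sw_inv]
    have hv : (((sw (⟨0, h0⟩ : Fin n)) (0 : Fin (n+1))) : ℕ) = 1 := by
      rw [sw_val']
      simp [swn]
    simp only [hv, Fin.val_zero]
    rw [show fnat n 0 0 = 1 from fnat_mid (by omega) (by omega),
      show fnat n 0 1 = 1 from fnat_mid (by omega) (by omega)]
    rw [one_mul, map_one]
  · have : σ n 0 = 1 := by rw [σ, dif_neg h0]
    rw [this]
    simpa using ρf_one

lemma ρf_A {n j : ℕ} (hj1 : 1 ≤ j) : ρf n (A n 0 j) = 1 := by
  rw [Adef hj1]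
  have hP : πn n (Pg n 1 j) 0 = 0 := fix0_Pg (le_refl 1)
  have hs : πn n ((σ n 0)^2) (0 : Fin (n+1)) = 0 := by rw [πn_σ0_sq]; rfl
  rw [ρf_mul (fix0_mul hP hs), ρf_mul hP, ρf_σ0_sq, ρf_inv hP]
  group

/-! ### coset decomposition -/

lemma σ_mem_BnC {n k : ℕ} (hk1 : 1 ≤ k) (hkn : k < n) :
    σ n k ∈ Subgroup.closure (BnSet n) :=
  Subgroup.subset_closure ⟨k, hk1, by omega, rfl⟩

lemma A_mem_V0C {n j : ℕ} (hj1 : 1 ≤ j) (hjn : j ≤ n) :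
    A n 0 j ∈ Subgroup.closure (SVset n) :=
  Subgroup.subset_closure (A_mem_SV hj1 hjn)

lemma conjBn {n : ℕ} {x w : BraidGroup n} (hx : x ∈ Subgroup.closure (BnSet n))
    (hw : w ∈ Subgroup.closure (SVset n)) :
    x * w * x⁻¹ ∈ Subgroup.closure (SVset n) :=
  ((Subgroup.mem_normalizer_iff.mp (Bn_le_normalizer hx)) w).mp hw

lemma conjBn' {n : ℕ} {x w : BraidGroup n} (hx : x ∈ Subgroup.closure (BnSet n))
    (hw : w ∈ Subgroup.closure (SVset n)) :
    x⁻¹ * w * x ∈ Subgroup.closure (SVset n) := by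
  have := conjBn (inv_mem hx) hw
  simpa using this

def Pprop (n : ℕ) (b : BraidGroup n) : Prop :=
  ∃ i x v, i ≤ n ∧ x ∈ Subgroup.closure (BnSet n) ∧ v ∈ Subgroup.closure (SVset n) ∧
    b = Pg n 0 i * x * v

lemma Pstep {n k : ℕ} (hk : k < n) {b : BraidGroup n} (hb : Pprop n b) :
    Pprop n (σ n k * b) ∧ Pprop n ((σ n k)⁻¹ * b) := by
  obtain ⟨i, x, v, hin, hx, hv, rfl⟩ := hb
  by_cases h1 : i + 1 ≤ k
  · have hcomm : σ n k * Pg n 0 i = Pg n 0 i * σ n k := σ_comm_Pg_high (by omega)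
    have hcomm' : (σ n k)⁻¹ * Pg n 0 i = Pg n 0 i * (σ n k)⁻¹ :=
      (Commute.inv_left hcomm).eq
    have hσ := σ_mem_BnC (show 1 ≤ k by omega) hk
    constructor
    · exact ⟨i, σ n k * x, v, hin, mul_mem hσ hx, hv, by
        calc σ n k * (Pg n 0 i * x * v) = (σ n k * Pg n 0 i) * x * v := by group
          _ = (Pg n 0 i * σ n k) * x * v := by rw [hcomm]
          _ = Pg n 0 i * (σ n k * x) * v := by group⟩
    · exact ⟨i, (σ n k)⁻¹ * x, v, hin, mul_mem (inv_mem hσ) hx, hv, by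
        calc (σ n k)⁻¹ * (Pg n 0 i * x * v) = ((σ n k)⁻¹ * Pg n 0 i) * x * v := by group
          _ = (Pg n 0 i * (σ n k)⁻¹) * x * v := by rw [hcomm']
          _ = Pg n 0 i * ((σ n k)⁻¹ * x) * v := by group⟩
  · by_cases h2 : k + 2 ≤ i
    · have hs : σ n k * Pg n 0 i = Pg n 0 i * σ n (k+1) := σ_slide (Nat.zero_le k) h2 hin
      have hs' : (σ n k)⁻¹ * Pg n 0 i = Pg n 0 i * (σ n (k+1))⁻¹ := by
        calc (σ n k)⁻¹ * Pg n 0 i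
            = (σ n k)⁻¹ * ((σ n k * Pg n 0 i) * (σ n (k+1))⁻¹) := by rw [hs]; group
          _ = Pg n 0 i * (σ n (k+1))⁻¹ := by group
      have hσ := σ_mem_BnC (show 1 ≤ k + 1 by omega) (show k + 1 < n by omega)
      constructor
      · exact ⟨i, σ n (k+1) * x, v, hin, mul_mem hσ hx, hv, by
          calc σ n k * (Pg n 0 i * x * v) = (σ n k * Pg n 0 i) * x * v := by group
            _ = (Pg n 0 i * σ n (k+1)) * x * v := by rw [hs]
            _ = Pg n 0 i * (σ n (k+1) * x) * v := by group⟩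
      · exact ⟨i, (σ n (k+1))⁻¹ * x, v, hin, mul_mem (inv_mem hσ) hx, hv, by
          calc (σ n k)⁻¹ * (Pg n 0 i * x * v) = ((σ n k)⁻¹ * Pg n 0 i) * x * v := by group
            _ = (Pg n 0 i * (σ n (k+1))⁻¹) * x * v := by rw [hs']
            _ = Pg n 0 i * ((σ n (k+1))⁻¹ * x) * v := by group⟩
    · by_cases h3 : k = i
      · have hin' : i < n := by omega
        have e := sq_c (n := n) (m := i) hin'
        have hA := A_mem_V0C (show 1 ≤ i + 1 by omega) (show i + 1 ≤ n by omega)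
        have e2 : (σ n i)⁻¹ * Pg n 0 i = σ n i * Pg n 0 i * (A n 0 (i+1))⁻¹ := by
          rw [eq_mul_inv_iff_mul_eq]
          calc (σ n i)⁻¹ * Pg n 0 i * A n 0 (i+1)
              = (σ n i)⁻¹ * (Pg n 0 i * A n 0 (i+1)) := by group
            _ = (σ n i)⁻¹ * ((σ n i)^2 * Pg n 0 i) := by rw [← e]
            _ = σ n i * Pg n 0 i := by simp only [pow_two]; group
        constructor
        · exact ⟨i+1, x, v, by omega, hx, hv, by
            rw [h3, Pg_succ (Nat.zero_le i)]; group⟩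
        · exact ⟨i+1, x, (x⁻¹ * (A n 0 (i+1))⁻¹ * x) * v, by omega, hx,
            mul_mem (conjBn' hx (inv_mem hA)) hv, by
            rw [h3, Pg_succ (Nat.zero_le i)]
            calc (σ n i)⁻¹ * (Pg n 0 i * x * v)
                = ((σ n i)⁻¹ * Pg n 0 i) * x * v := by group
              _ = (σ n i * Pg n 0 i * (A n 0 (i+1))⁻¹) * x * v := by rw [e2]
              _ = σ n i * Pg n 0 i * x * ((x⁻¹ * (A n 0 (i+1))⁻¹ * x) * v) := by group⟩
      · have hik : i = k + 1 := by omega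
        have e := sq_c (n := n) (m := k) hk
        have hA := A_mem_V0C (show 1 ≤ k + 1 by omega) (show k + 1 ≤ n by omega)
        constructor
        · exact ⟨k, x, (x⁻¹ * A n 0 (k+1) * x) * v, by omega, hx,
            mul_mem (conjBn' hx hA) hv, by
            rw [hik, Pg_succ (Nat.zero_le k)]
            calc σ n k * ((σ n k * Pg n 0 k) * x * v)
                = ((σ n k)^2 * Pg n 0 k) * x * v := by simp only [pow_two]; group
              _ = (Pg n 0 k * A n 0 (k+1)) * x * v := by rw [e]
              _ = Pg n 0 k * x * ((x⁻¹ * A n 0 (k+1) * x) * v) := by group⟩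
        · exact ⟨k, x, v, by omega, hx, hv, by
            rw [hik, Pg_succ (Nat.zero_le k)]; group⟩

def Usub (n : ℕ) : Subgroup (BraidGroup n) where
  carrier := {g | (∀ b, Pprop n b → Pprop n (g * b)) ∧ (∀ b, Pprop n b → Pprop n (g⁻¹ * b))}
  one_mem' := by
    constructor <;> intro b hb <;> simpa using hb
  mul_mem' := by
    rintro g h ⟨hg1, hg2⟩ ⟨hh1, hh2⟩
    constructor
    · intro b hb
      rw [mul_assoc]
      exact hg1 _ (hh1 b hb)
    · intro b hb
      rw [mul_inv_rev, mul_assoc]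
      exact hh2 _ (hg2 b hb)
  inv_mem' := by
    rintro g ⟨hg1, hg2⟩
    refine ⟨hg2, ?_⟩
    intro b hb
    rw [inv_inv]
    exact hg1 b hb

lemma all_P {n : ℕ} (b : BraidGroup n) : Pprop n b := by
  have hU : ∀ g : BraidGroup n, g ∈ Usub n := by
    have htop : Subgroup.closure (Set.range (PresentedGroup.of :
        Fin n → BraidGroup n)) ≤ Usub n := by
      rw [Subgroup.closure_le]
      rintro g ⟨x, rfl⟩
      have hσ : PresentedGroup.of x = σ n (x : ℕ) := by
        rw [σ, dif_pos x.isLt]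
      constructor
      · intro b hb
        rw [hσ]
        exact (Pstep x.isLt hb).1
      · intro b hb
        rw [hσ]
        exact (Pstep x.isLt hb).2
    intro g
    exact htop (by rw [PresentedGroup.closure_range_of]; exact Subgroup.mem_top g)
  have hP1 : Pprop n 1 := ⟨0, 1, 1, Nat.zero_le n, one_mem _, one_mem _, by
    simp [Pg]⟩
  have := (hU b).1 1 hP1
  simpa using this

lemma BnC_fix0 {n : ℕ} {x : BraidGroup n} (hx : x ∈ Subgroup.closure (BnSet n)) :
    πn n x (0 : Fin (n+1)) = 0 := by
  induction hx using Subgroup.closure_induction with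
  | mem y hy => obtain ⟨k, hk1, _, rfl⟩ := hy; exact fix0_σ hk1
  | one => simp
  | mul a b _ _ iha ihb => exact fix0_mul iha ihb
  | inv a _ iha => exact fix0_inv iha

lemma V0C_fix0 {n : ℕ} {x : BraidGroup n} (hx : x ∈ Subgroup.closure (SVset n)) :
    πn n x (0 : Fin (n+1)) = 0 := by
  induction hx using Subgroup.closure_induction with
  | mem y hy => obtain ⟨j, hj1, _, rfl⟩ := hy; rw [πn_A hj1]; rfl
  | one => simp
  | mul a b _ _ iha ihb => exact fix0_mul iha ihb
  | inv a _ iha => exact fix0_inv iha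

lemma πc_val {n : ℕ} : ∀ {i : ℕ}, i ≤ n → ((πn n (Pg n 0 i)) (0 : Fin (n+1)) : ℕ) = i := by
  intro i
  induction i with
  | zero => intro _; simp [Pg]
  | succ i ih =>
    intro hin
    rw [Pg_succ (Nat.zero_le i), map_mul, Equiv.Perm.mul_apply]
    rw [πn_σ_apply_val (show i < n by omega), ih (by omega)]
    unfold swn
    rw [if_pos rfl]

end BraidB

open BraidB in
/-- In `B_{n+1}`, let `B_n` be the subgroup generated by `σ_1, …, σ_{n−1}`, `V_0` the
subgroup generated by `A_{0,1}, …, A_{0,n}`, and `B̂_n = {b : π(b)(0) = 0}`. Then `V_0`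
is normal in `B̂_n`, `B̂_n = B_n V_0` and `B_n ∩ V_0 = {1}`, so `B̂_n = B_n ⋉ V_0`. -/
theorem affine_braid_semidirect_decomposition (n : ℕ) :
    ∃ π : BraidGroup n →* Equiv.Perm (Fin (n + 1)),
      (∀ i : Fin n, π (PresentedGroup.of i) = Equiv.swap i.castSucc i.succ) ∧
      ∀ (Bn V0 Bhat : Subgroup (BraidGroup n)),
        Bn = Subgroup.closure {x | ∃ k : ℕ, 1 ≤ k ∧ k ≤ n - 1 ∧ x = σ n k} →
        V0 = Subgroup.closure {x | ∃ j : ℕ, 1 ≤ j ∧ j ≤ n ∧ x = A n 0 j} →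
        Bhat = Subgroup.comap π
          (MulAction.stabilizer (Equiv.Perm (Fin (n + 1))) (0 : Fin (n + 1))) →
        (V0 ≤ Bhat ∧
         (∀ b ∈ Bhat, ∀ v ∈ V0, b * v * b⁻¹ ∈ V0) ∧
         (∀ b ∈ Bhat, ∃ x ∈ Bn, ∃ v ∈ V0, b = x * v) ∧
         (∀ x : BraidGroup n, x ∈ Bn → x ∈ V0 → x = 1)) := by
  refine ⟨πn n, fun i => (πn_of i).trans rfl, ?_⟩
  intro Bn V0 Bhat hBn hV0 hBhat
  rw [show {x : BraidGroup n | ∃ k : ℕ, 1 ≤ k ∧ k ≤ n - 1 ∧ x = σ n k} = BnSet n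
    from rfl] at hBn
  rw [show {x : BraidGroup n | ∃ j : ℕ, 1 ≤ j ∧ j ≤ n ∧ x = A n 0 j} = SVset n
    from rfl] at hV0
  subst hBn; subst hV0; subst hBhat
  have hmem : ∀ b : BraidGroup n,
      b ∈ Subgroup.comap (πn n)
        (MulAction.stabilizer (Equiv.Perm (Fin (n+1))) (0 : Fin (n+1))) ↔
      πn n b 0 = 0 := by
    intro b
    simp [Subgroup.mem_comap, MulAction.mem_stabilizer_iff, Equiv.Perm.smul_def]
  have hdec : ∀ b : BraidGroup n, πn n b 0 = 0 →
      ∃ x ∈ Subgroup.closure (BnSet n), ∃ v ∈ Subgroup.closure (SVset n), b = x * v := by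
    intro b hb
    obtain ⟨i, x, v, hin, hx, hv, rfl⟩ := all_P b
    have hb0 : ((πn n (Pg n 0 i * x * v)) (0 : Fin (n+1)) : ℕ) = i := by
      rw [map_mul, map_mul, Equiv.Perm.mul_apply, V0C_fix0 hv, Equiv.Perm.mul_apply,
        BnC_fix0 hx, πc_val hin]
    rw [hb] at hb0
    have hi0 : i = 0 := by simpa using hb0.symm
    subst hi0
    exact ⟨x, hx, v, hv, by simp [Pg]⟩
  refine ⟨?_, ?_, ?_, ?_⟩
  · rw [Subgroup.closure_le]
    rintro x ⟨j, hj1, hjn, rfl⟩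
    exact (hmem _).mpr (by rw [πn_A hj1]; rfl)
  · intro b hb v hv
    obtain ⟨x, hx, w, hw, rfl⟩ := hdec b ((hmem b).mp hb)
    have hinner : w * v * w⁻¹ ∈ Subgroup.closure (SVset n) :=
      mul_mem (mul_mem hw hv) (inv_mem hw)
    have hconj := conjBn hx hinner
    rwa [show x * (w * v * w⁻¹) * x⁻¹ = (x * w) * v * (x * w)⁻¹ from by group] at hconj
  · intro b hb
    exact hdec b ((hmem b).mp hb)
  · intro x hxB hxV
    have hρ1 : ∀ y ∈ Subgroup.closure (BnSet n), ρf n y = y := by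
      intro y hy
      induction hy using Subgroup.closure_induction with
      | mem z hz =>
        obtain ⟨k, hk1, hk2, rfl⟩ := hz
        exact ρf_σ hk1 (by omega)
      | one => exact ρf_one
      | mul a b ha hb iha ihb => rw [ρf_mul (BnC_fix0 ha), iha, ihb]
      | inv a ha iha => rw [ρf_inv (BnC_fix0 ha), iha]
    have hρ2 : ∀ y ∈ Subgroup.closure (SVset n), ρf n y = 1 := by
      intro y hy
      induction hy using Subgroup.closure_induction with
      | mem z hz =>
        obtain ⟨j, hj1, hj2, rfl⟩ := hz
        exact ρf_A hj1
      | one => exact ρf_one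
      | mul a b ha hb iha ihb => rw [ρf_mul (V0C_fix0 ha), iha, ihb, one_mul]
      | inv a ha iha => rw [ρf_inv (V0C_fix0 ha), iha]; exact inv_one
    rw [← hρ1 x hxB, hρ2 x hxV]
end
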